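/- arXiv:2102.08681 — 6 statements merged into one kernel-verified Lean document; each statement's English description precedes it below -/
import Mathlib

section
/- Let p > 1, K ≥ 1, and let w̃ be an A_p weight on ℝ with constant K. Let Ω ⊆ ℝ be a nonempty open set and E ⊊ Ω a relatively closed subset such that no connected component of Ω is contained in E. Then every bounded w̃-harmonic function on Ω \ E has a (not necessarily bounded) w̃-harmonic extension to Ω if and only if I \ E is connected for every connected component I of Ω. Moreover, whenever such an extension exists, it is unique. -/
/-! On a component `I` of `Ω`, a `w̃`-harmonic function is an affine function of the potential
`∫₀ˣ w̃^{1/(1-p)}`, which is finite because `w̃ ∈ A_p` and strictly increasing because `w̃ > 0`.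
An affine function of an injective function is determined by its values at two points, hence on
any nonempty open set, e.g. on one component of `Ω \ E` inside `I`. This gives uniqueness, and
existence when each `I \ E` is a single component of `Ω \ E`. If some `I \ E` splits, the
indicator of one of its components is bounded and harmonic on `Ω \ E`, but it is not the
restriction of a function affine in the potential on `I`. -/

open MeasureTheory Set

/-- `v : ℝ → (0,∞)` is an `A_q` weight on `ℝ` with constant `K`:
for every bounded open interval `I`,
`((1/|I|)∫_I v) · ((1/|I|)∫_I v^{1/(1-q)})^{q-1} ≤ K`. -/
def IsAqWeight (q K : ℝ) (v : ℝ → ℝ) : Prop :=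
  Measurable v ∧ (∀ x, 0 < v x) ∧
    ∀ a b : ℝ, a < b →
      ((∫⁻ x in Set.Ioo a b, ENNReal.ofReal (v x)) / ENNReal.ofReal (b - a)) *
        ((∫⁻ x in Set.Ioo a b, ENNReal.ofReal (v x ^ (1 / (1 - q)))) /
            ENNReal.ofReal (b - a)) ^ (q - 1) ≤
      ENNReal.ofReal K

/-- `u` is `w`-harmonic on the open set `U ⊆ ℝ` (with exponent `p`): on every connected
component of `U` there are constants `a, b` with `u x = b + a ∫₀ˣ w(t)^{1/(1-p)} dt`. -/
def WHarmonicOn (p : ℝ) (w : ℝ → ℝ) (U : Set ℝ) (u : ℝ → ℝ) : Prop :=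
  ∀ x ∈ U, ∃ a b : ℝ, ∀ y ∈ connectedComponentIn U x,
    u y = b + a * ∫ t in (0:ℝ)..y, w t ^ (1 / (1 - p))

/-- `u` is bounded on `S`. -/
def BddOnSet (u : ℝ → ℝ) (S : Set ℝ) : Prop := ∃ M : ℝ, ∀ x ∈ S, |u x| ≤ M

open Function Topology

section Topology

variable {X : Type*} [TopologicalSpace X]

theorem IsOpen.nontrivial_of_nonempty [T1Space X] [∀ x : X, Filter.NeBot (𝓝[≠] x)]
    {S : Set X} (hS : IsOpen S) (hne : S.Nonempty) : S.Nontrivial :=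
  let ⟨x, hx⟩ := hne
  (infinite_of_mem_nhds x (hS.mem_nhds hx)).nontrivial

theorem IsOpen.diff_of_inter_closure_subset {Ω E : Set X} (hΩ : IsOpen Ω)
    (hE : Ω ∩ closure E ⊆ E) : IsOpen (Ω \ E) := by
  have h : Ω \ E = Ω \ closure E :=
    Set.Subset.antisymm (fun x hx => ⟨hx.1, fun hc => hx.2 (hE ⟨hx.1, hc⟩)⟩)
      (sdiff_subset_sdiff_right subset_closure)
  exact h ▸ hΩ.sdiff isClosed_closure

theorem mem_connectedComponentIn_iff_eq {F : Set X} {x y : X} (hy : y ∈ F) :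
    y ∈ connectedComponentIn F x ↔ connectedComponentIn F x = connectedComponentIn F y :=
  ⟨connectedComponentIn_eq, fun h => h ▸ mem_connectedComponentIn hy⟩

theorem connectedComponentIn_diff_subset (F E : Set X) (x : X) :
    connectedComponentIn (F \ E) x ⊆ connectedComponentIn F x \ E :=
  fun _ hy => ⟨connectedComponentIn_mono x sdiff_subset hy, (connectedComponentIn_subset _ _ hy).2⟩

theorem connectedComponentIn_diff_eq {F E : Set X} {x : X} (hx : x ∈ F \ E)
    (h : IsPreconnected (connectedComponentIn F x \ E)) :
    connectedComponentIn (F \ E) x = connectedComponentIn F x \ E :=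
  (connectedComponentIn_diff_subset F E x).antisymm <|
    h.subset_connectedComponentIn ⟨mem_connectedComponentIn hx.1, hx.2⟩
      (sdiff_subset_sdiff_left (connectedComponentIn_subset F x))

end Topology

section Weight

variable {q K : ℝ} {v : ℝ → ℝ}

theorem IsAqWeight.setLIntegral_rpow_lt_top (hv : IsAqWeight q K v) (hq : 1 < q) {a b : ℝ}
    (hab : a < b) : ∫⁻ x in Ioo a b, ENNReal.ofReal (v x ^ (1 / (1 - q))) < ⊤ := by
  obtain ⟨hmeas, hpos, hbound⟩ := hv
  have hlen : ENNReal.ofReal (b - a) ≠ 0 := by simpa using hab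
  have hmass : 0 < ∫⁻ x in Ioo a b, ENNReal.ofReal (v x) := by
    rw [setLIntegral_pos_iff hmeas.ennreal_ofReal]
    simp [Function.support, hpos, hab]
  have hmean : (∫⁻ x in Ioo a b, ENNReal.ofReal (v x)) / ENNReal.ofReal (b - a) ≠ 0 :=
    (ENNReal.div_pos hmass.ne' ENNReal.ofReal_ne_top).ne'
  rw [lt_top_iff_ne_top]
  intro htop
  have h := hbound a b hab
  rw [htop, ENNReal.top_div_of_ne_top ENNReal.ofReal_ne_top,
    ENNReal.top_rpow_of_pos (by linarith), ENNReal.mul_top hmean, top_le_iff] at h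
  exact ENNReal.ofReal_ne_top h

theorem IsAqWeight.intervalIntegrable_rpow (hv : IsAqWeight q K v) (hq : 1 < q) (a b : ℝ) :
    IntervalIntegrable (fun t => v t ^ (1 / (1 - q))) volume a b := by
  wlog hab : a < b generalizing a b
  · rcases (not_lt.1 hab).eq_or_lt with rfl | hba
    · exact .refl
    · exact (this b a hba).symm
  rw [intervalIntegrable_iff_integrableOn_Ioo_of_le hab.le]
  refine ⟨(hv.1.pow_const _).aestronglyMeasurable, ?_⟩
  rw [hasFiniteIntegral_iff_ofReal (ae_of_all _ fun t => (Real.rpow_pos_of_pos (hv.2.1 t) _).le)]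
  exact hv.setLIntegral_rpow_lt_top hq hab

end Weight

theorem strictMono_intervalIntegral_of_pos {f : ℝ → ℝ}
    (hf : ∀ a b, IntervalIntegrable f volume a b) (hpos : ∀ x, 0 < f x) (c : ℝ) :
    StrictMono fun y => ∫ t in c..y, f t := by
  intro y₁ y₂ h
  have hdiff := intervalIntegral.integral_interval_sub_left (hf c y₂) (hf c y₁)
  have hincr := intervalIntegral.intervalIntegral_pos_of_pos (hf y₁ y₂) hpos h
  dsimp only
  linarith

noncomputable def wPotential (p : ℝ) (w : ℝ → ℝ) (y : ℝ) : ℝ :=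
  ∫ t in (0 : ℝ)..y, w t ^ (1 / (1 - p))

theorem IsAqWeight.strictMono_wPotential {p K : ℝ} {w : ℝ → ℝ} (hw : IsAqWeight p K w)
    (hp : 1 < p) : StrictMono (wPotential p w) :=
  strictMono_intervalIntegral_of_pos (hw.intervalIntegrable_rpow hp)
    (fun t => Real.rpow_pos_of_pos (hw.2.1 t) _) 0

theorem affine_coeffs_eq_of_eqOn {g : ℝ → ℝ} (hg : Injective g) {S : Set ℝ} (hS : S.Nontrivial)
    {a₁ b₁ a₂ b₂ : ℝ} (h : ∀ y ∈ S, b₁ + a₁ * g y = b₂ + a₂ * g y) : a₁ = a₂ ∧ b₁ = b₂ := by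
  obtain ⟨y₁, hy₁, y₂, hy₂, hne⟩ := hS
  have hg_ne : g y₁ - g y₂ ≠ 0 := sub_ne_zero.2 (hg.ne hne)
  have ha : a₁ = a₂ := by
    have h0 : (a₁ - a₂) * (g y₁ - g y₂) = 0 := by linear_combination h y₁ hy₁ - h y₂ hy₂
    linarith [(mul_eq_zero.1 h0).resolve_right hg_ne]
  exact ⟨ha, by linear_combination h y₁ hy₁ - ha * g y₁⟩

section WHarmonic

variable {p : ℝ} {w : ℝ → ℝ} {Ω E : Set ℝ}

theorem wHarmonicOn_indicator_connectedComponentIn (U : Set ℝ) (x₀ : ℝ) :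
    WHarmonicOn p w U ((connectedComponentIn U x₀).indicator 1) := by
  classical
  intro y hy
  refine ⟨0, (connectedComponentIn U x₀).indicator 1 y, fun z hz => ?_⟩
  have hzU : z ∈ U := connectedComponentIn_subset U y hz
  rw [zero_mul, add_zero, indicator_apply, indicator_apply, mem_connectedComponentIn_iff_eq hzU,
    mem_connectedComponentIn_iff_eq hy, connectedComponentIn_eq hz]
  rfl

theorem affine_coeffs_eq_of_eqOn_connectedComponentIn_diff
    (hg : Injective (wPotential p w)) (hΩE : IsOpen (Ω \ E)) {x : ℝ}
    (hx : ¬ connectedComponentIn Ω x ⊆ E) {a₁ b₁ a₂ b₂ : ℝ}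
    (h : ∀ y ∈ connectedComponentIn Ω x \ E,
      b₁ + a₁ * wPotential p w y = b₂ + a₂ * wPotential p w y) :
    a₁ = a₂ ∧ b₁ = b₂ := by
  obtain ⟨y, hyC, hyE⟩ := not_subset.1 hx
  have hy : y ∈ Ω \ E := ⟨connectedComponentIn_subset Ω x hyC, hyE⟩
  refine affine_coeffs_eq_of_eqOn hg
    (hΩE.connectedComponentIn.nontrivial_of_nonempty ⟨y, mem_connectedComponentIn hy⟩)
    fun z hz => h z ?_
  rw [connectedComponentIn_eq hyC]
  exact connectedComponentIn_diff_subset Ω E y hz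

theorem WHarmonicOn.eqOn_of_eqOn_diff (hg : Injective (wPotential p w)) (hΩE : IsOpen (Ω \ E))
    (hcomp : ∀ x ∈ Ω, ¬ connectedComponentIn Ω x ⊆ E) {U₁ U₂ : ℝ → ℝ}
    (hU₁ : WHarmonicOn p w Ω U₁) (hU₂ : WHarmonicOn p w Ω U₂) (h : EqOn U₁ U₂ (Ω \ E)) :
    EqOn U₁ U₂ Ω := by
  intro x hx
  obtain ⟨a₁, b₁, h₁⟩ := hU₁ x hx
  obtain ⟨a₂, b₂, h₂⟩ := hU₂ x hx
  obtain ⟨rfl, rfl⟩ := affine_coeffs_eq_of_eqOn_connectedComponentIn_diff hg hΩE (hcomp x hx)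
    fun y hy => (h₁ y hy.1).symm.trans <|
      (h ⟨connectedComponentIn_subset Ω x hy.1, hy.2⟩).trans (h₂ y hy.1)
  rw [h₁ x (mem_connectedComponentIn hx), h₂ x (mem_connectedComponentIn hx)]

theorem exists_wHarmonicOn_extension (hg : Injective (wPotential p w)) (hΩE : IsOpen (Ω \ E))
    (hcomp : ∀ x ∈ Ω, ¬ connectedComponentIn Ω x ⊆ E)
    (hpre : ∀ x ∈ Ω, IsPreconnected (connectedComponentIn Ω x \ E)) {u : ℝ → ℝ}
    (hu : WHarmonicOn p w (Ω \ E) u) :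
    ∃ U : ℝ → ℝ, WHarmonicOn p w Ω U ∧ ∀ x ∈ Ω \ E, U x = u x := by
  have hrep : ∀ x ∈ Ω, ∃ a b : ℝ, ∀ y ∈ connectedComponentIn Ω x \ E,
      u y = b + a * wPotential p w y := by
    intro x hx
    obtain ⟨y, hyC, hyE⟩ := not_subset.1 (hcomp x hx)
    have hy : y ∈ Ω \ E := ⟨connectedComponentIn_subset Ω x hyC, hyE⟩
    rw [connectedComponentIn_eq hyC,
      ← connectedComponentIn_diff_eq hy (connectedComponentIn_eq hyC ▸ hpre x hx)]
    exact hu y hy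
  classical
  choose a b hab using hrep
  refine ⟨fun y => if hy : y ∈ Ω then b y hy + a y hy * wPotential p w y else 0,
    fun x hx => ⟨a x hx, b x hx, fun z hz => ?_⟩, fun x hx => ?_⟩
  · have hzΩ : z ∈ Ω := connectedComponentIn_subset Ω x hz
    have hC : connectedComponentIn Ω x = connectedComponentIn Ω z := connectedComponentIn_eq hz
    obtain ⟨ha, hb⟩ := affine_coeffs_eq_of_eqOn_connectedComponentIn_diff hg hΩE (hcomp z hzΩ)
      fun y hy => (hab z hzΩ y hy).symm.trans (hab x hx y (hC ▸ hy))
    simp only [dif_pos hzΩ, ha, hb]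
    rfl
  · simp only [dif_pos hx.1]
    exact (hab x hx.1 x ⟨mem_connectedComponentIn hx.1, hx.2⟩).symm

theorem isPreconnected_connectedComponentIn_diff_of_extension
    (hg : Injective (wPotential p w)) (hΩE : IsOpen (Ω \ E))
    (hext : ∀ u : ℝ → ℝ, WHarmonicOn p w (Ω \ E) u → BddOnSet u (Ω \ E) →
      ∃ U : ℝ → ℝ, WHarmonicOn p w Ω U ∧ ∀ x ∈ Ω \ E, U x = u x) (x : ℝ) :
    IsPreconnected (connectedComponentIn Ω x \ E) := by
  rcases (connectedComponentIn Ω x \ E).eq_empty_or_nonempty with h | ⟨x₀, hx₀C, hx₀E⟩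
  · exact h ▸ isPreconnected_empty
  have hx₀ : x₀ ∈ Ω \ E := ⟨connectedComponentIn_subset Ω x hx₀C, hx₀E⟩
  rw [connectedComponentIn_eq hx₀C]
  set C := connectedComponentIn (Ω \ E) x₀
  have hC : C ⊆ connectedComponentIn Ω x₀ \ E := connectedComponentIn_diff_subset Ω E x₀
  have hbdd : BddOnSet (C.indicator 1) (Ω \ E) :=
    ⟨1, fun y _ => by by_cases hy : y ∈ C <;> simp [hy]⟩
  obtain ⟨U, hU, hUu⟩ := hext _ (wHarmonicOn_indicator_connectedComponentIn _ x₀) hbdd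
  obtain ⟨a, b, hab⟩ := hU x₀ hx₀.1
  have hval : ∀ y ∈ connectedComponentIn Ω x₀ \ E, b + a * wPotential p w y = C.indicator 1 y :=
    fun y hy => (hab y hy.1).symm.trans (hUu y ⟨connectedComponentIn_subset Ω x₀ hy.1, hy.2⟩)
  -- `U` is `1` on the open set `C`, so `U ≡ 1` on the whole component of `Ω`.
  obtain ⟨rfl, rfl⟩ : a = 0 ∧ b = 1 := affine_coeffs_eq_of_eqOn hg
    (hΩE.connectedComponentIn.nontrivial_of_nonempty ⟨x₀, mem_connectedComponentIn hx₀⟩)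
    fun y hy => by rw [hval y (hC hy), indicator_of_mem hy]; simp
  have hsub : connectedComponentIn Ω x₀ \ E ⊆ C := fun y hy => by
    by_contra hyC
    simpa [indicator_of_notMem hyC] using hval y hy
  exact hC.antisymm hsub ▸ isPreconnected_connectedComponentIn

end WHarmonic

theorem weakly_removable_bounded_wharmonic_on_weighted_R_general
    (p K : ℝ) (hp : 1 < p) (w : ℝ → ℝ) (hw : IsAqWeight p K w)
    (Ω E : Set ℝ) (hΩopen : IsOpen Ω)
    (hEclosed : Ω ∩ closure E ⊆ E)
    (hcomp : ∀ x ∈ Ω, ¬ connectedComponentIn Ω x ⊆ E) :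
    ((∀ u : ℝ → ℝ, WHarmonicOn p w (Ω \ E) u → BddOnSet u (Ω \ E) →
        ∃ U : ℝ → ℝ, WHarmonicOn p w Ω U ∧ ∀ x ∈ Ω \ E, U x = u x) ↔
      ∀ x ∈ Ω, IsPreconnected (connectedComponentIn Ω x \ E)) ∧
    (∀ u U₁ U₂ : ℝ → ℝ, WHarmonicOn p w (Ω \ E) u →
      WHarmonicOn p w Ω U₁ → WHarmonicOn p w Ω U₂ →
      (∀ x ∈ Ω \ E, U₁ x = u x) → (∀ x ∈ Ω \ E, U₂ x = u x) →
      ∀ x ∈ Ω, U₁ x = U₂ x) := by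
  have hg := (hw.strictMono_wPotential hp).injective
  have hΩE := hΩopen.diff_of_inter_closure_subset hEclosed
  refine ⟨⟨fun hext x _ => isPreconnected_connectedComponentIn_diff_of_extension hg hΩE hext x,
    fun hpre u hu _ => exists_wHarmonicOn_extension hg hΩE hcomp hpre hu⟩, ?_⟩
  intro u U₁ U₂ _ hU₁ hU₂ h₁ h₂
  exact hU₁.eqOn_of_eqOn_diff hg hΩE hcomp hU₂ fun x hx => (h₁ x hx).trans (h₂ x hx).symm

/-- **Weak removability for bounded `w̃`-harmonic functions on weighted `ℝ`.**
Every bounded `w̃`-harmonic function on `Ω \ E` has a (not necessarily bounded)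
`w̃`-harmonic extension to `Ω` if and only if `I \ E` is connected for every
connected component `I` of `Ω`. Moreover, such extensions, whenever they exist,
are unique. -/
theorem weakly_removable_bounded_wharmonic_on_weighted_R
    (p K : ℝ) (hp : 1 < p) (hK : 1 ≤ K) (w : ℝ → ℝ) (hw : IsAqWeight p K w)
    (Ω E : Set ℝ) (hΩopen : IsOpen Ω) (hΩne : Ω.Nonempty)
    (hE : E ⊂ Ω) (hEclosed : Ω ∩ closure E ⊆ E)
    (hcomp : ∀ x ∈ Ω, ¬ connectedComponentIn Ω x ⊆ E) :
    ((∀ u : ℝ → ℝ, WHarmonicOn p w (Ω \ E) u → BddOnSet u (Ω \ E) →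
        ∃ U : ℝ → ℝ, WHarmonicOn p w Ω U ∧ ∀ x ∈ Ω \ E, U x = u x) ↔
      ∀ x ∈ Ω, IsPreconnected (connectedComponentIn Ω x \ E)) ∧
    (∀ u U₁ U₂ : ℝ → ℝ, WHarmonicOn p w (Ω \ E) u →
      WHarmonicOn p w Ω U₁ → WHarmonicOn p w Ω U₂ →
      (∀ x ∈ Ω \ E, U₁ x = u x) → (∀ x ∈ Ω \ E, U₂ x = u x) →
      ∀ x ∈ Ω, U₁ x = U₂ x) :=
  weakly_removable_bounded_wharmonic_on_weighted_R_general p K hp w hw Ω E hΩopen hEclosed hcomp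
end

section
/- Let p > 1, Q ≥ 1 and x > 1. Let U : (0,x) → ℝ be a nondecreasing continuous Q-quasiminimizer on (0,x) (with respect to unweighted ℝ and exponent p) with U(t) = t for all 0 < t ≤ 1, and suppose that a := lim_{t→x⁻} U(t) is finite. Then Q a^p ≥ x^{p-1} + (a-1)^p (1 - 1/x)^{1-p}. -/
open MeasureTheory Set

/-- `u` is locally absolutely continuous on the open set `U ⊆ ℝ` with derivative `du`:
on every compact subinterval of `U`, `du` is integrable and the fundamental theorem
of calculus holds for `u` with integrand `du`. -/
def LocACWith (U : Set ℝ) (u du : ℝ → ℝ) : Prop :=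
  ∀ a b : ℝ, a ≤ b → Set.Icc a b ⊆ U →
    MeasureTheory.IntegrableOn du (Set.Icc a b) ∧
      ∀ x ∈ Set.Icc a b, u x = u a + ∫ t in a..x, du t

/-- `du ∈ L^p_loc(U)`: `|du|^p` is integrable on every compact subinterval of `U`. -/
def LpLocOn (p : ℝ) (U : Set ℝ) (du : ℝ → ℝ) : Prop :=
  ∀ a b : ℝ, a ≤ b → Set.Icc a b ⊆ U →
    MeasureTheory.IntegrableOn (fun t => |du t| ^ p) (Set.Icc a b)

/-- `u` is a `Q`-quasiminimizer on the open set `U ⊆ ℝ` (unweighted, exponent `p`),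
witnessed by the derivative `du`: `u` is locally absolutely continuous with derivative
`du ∈ L^p_loc(U)`, and for every open `G` with compact closure contained in `U` and
every competitor `v` (locally absolutely continuous with derivative `dv ∈ L^p_loc(U)`)
agreeing with `u` on `U \ G`, one has `∫_G |u'|^p ≤ Q ∫_G |v'|^p`. -/
def IsQuasiminimizerWith (p Q : ℝ) (U : Set ℝ) (u du : ℝ → ℝ) : Prop :=
  Measurable du ∧ LocACWith U u du ∧ LpLocOn p U du ∧
    ∀ G : Set ℝ, IsOpen G → IsCompact (closure G) → closure G ⊆ U →
      ∀ v dv : ℝ → ℝ, Measurable dv → LocACWith U v dv → LpLocOn p U dv →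
        (∀ x ∈ U \ G, v x = u x) →
        ∫⁻ x in G, ENNReal.ofReal (|du x| ^ p) ≤
          ENNReal.ofReal Q * ∫⁻ x in G, ENNReal.ofReal (|dv x| ^ p)

/-- `u` is a `Q`-quasiminimizer on `U` (unweighted, exponent `p`). -/
def IsQuasiminimizerOn (p Q : ℝ) (U : Set ℝ) (u : ℝ → ℝ) : Prop :=
  ∃ du : ℝ → ℝ, IsQuasiminimizerWith p Q U u du

/-- `u` is `Q`-quasiharmonic on `U`: a continuous `Q`-quasiminimizer. -/
def IsQuasiharmonicOn (p Q : ℝ) (U : Set ℝ) (u : ℝ → ℝ) : Prop :=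
  ContinuousOn u U ∧ IsQuasiminimizerOn p Q U u

/-!
Comparing `U` on `[ε, b]` with its affine interpolant, quasiminimality gives
`∫_ε^b |U'|^p ≤ Q |U b - ε|^p / (b - ε)^(p-1)`, while Jensen's inequality on `[ε, 1]` and
`[1, b]` bounds the same energy from below by `(1 - ε) + |U b - 1|^p / (b - 1)^(p-1)`.
Letting `b → x⁻` with `ε = x - b` yields `1 + (a - 1)^p / (x - 1)^(p-1) ≤ Q a^p / x^(p-1)`,
and multiplying by `x^(p-1)` gives the claim.
-/

open Filter Topology

lemma rpow_setIntegral_abs_le {p : ℝ} (hp : 1 ≤ p) {f : ℝ → ℝ} {c d : ℝ} (hcd : c < d)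
    (hf : IntegrableOn f (Ioc c d)) (hfp : IntegrableOn (fun t => |f t| ^ p) (Ioc c d)) :
    (∫ t in Ioc c d, |f t|) ^ p ≤ (d - c) ^ (p - 1) * ∫ t in Ioc c d, |f t| ^ p := by
  have hdc : 0 < d - c := sub_pos.mpr hcd
  have hjensen := (convexOn_rpow hp).map_set_average_le (continuousOn_id.rpow_const
      fun _ _ => Or.inr (zero_le_one.trans hp)) isClosed_Ici (by simp [hcd]) (by simp)
      (Eventually.of_forall fun t => abs_nonneg (f t)) hf.abs hfp
  simp only [setAverage_eq, measureReal_def, Real.volume_Ioc, ENNReal.toReal_ofReal hdc.le,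
    smul_eq_mul] at hjensen
  rwa [Real.mul_rpow (inv_nonneg.mpr hdc.le) (integral_nonneg fun t => abs_nonneg _),
    Real.inv_rpow hdc.le, inv_mul_le_iff₀ (by positivity), ← mul_assoc, ← div_eq_mul_inv,
    ← Real.rpow_sub_one hdc.ne'] at hjensen

namespace LocACWith

variable {S : Set ℝ} {u du : ℝ → ℝ}

lemma intervalIntegrable (h : LocACWith S u du) {a b x : ℝ} (hab : a ≤ b) (hS : Icc a b ⊆ S)
    (hx : x ∈ Icc a b) : IntervalIntegrable du volume a x :=
  ((h a b hab hS).1.mono_set (uIcc_subset_Icc (left_mem_Icc.mpr hab) hx)).intervalIntegrable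

lemma add {w dw : ℝ → ℝ} (hu : LocACWith S u du) (hw : LocACWith S w dw) :
    LocACWith S (u + w) (du + dw) := by
  intro a b hab hS
  refine ⟨(hu a b hab hS).1.add (hw a b hab hS).1, fun x hx => ?_⟩
  change u x + w x = u a + w a + ∫ t in a..x, (du t + dw t)
  rw [(hu a b hab hS).2 x hx, (hw a b hab hS).2 x hx,
    intervalIntegral.integral_add (hu.intervalIntegrable hab hS hx)
      (hw.intervalIntegrable hab hS hx)]
  ring

lemma abs_sub_rpow_div_le_intervalIntegral {p : ℝ} (hp : 1 ≤ p) (h : LocACWith S u du)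
    (hLp : LpLocOn p S du) {c d : ℝ} (hcd : c < d) (hS : Icc c d ⊆ S) :
    |u d - u c| ^ p / (d - c) ^ (p - 1) ≤ ∫ t in c..d, |du t| ^ p := by
  obtain ⟨hint, hftc⟩ := h c d hcd.le hS
  have hdu : IntegrableOn du (Ioc c d) := hint.mono_set Ioc_subset_Icc_self
  have habs : |u d - u c| ≤ ∫ t in Ioc c d, |du t| := by
    rw [hftc d (right_mem_Icc.mpr hcd.le), add_sub_cancel_left,
      intervalIntegral.integral_of_le hcd.le]
    exact abs_integral_le_integral_abs
  rw [div_le_iff₀' (by simpa using Real.rpow_pos_of_pos (sub_pos.mpr hcd) (p - 1)),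
    intervalIntegral.integral_of_le hcd.le]
  exact (Real.rpow_le_rpow (abs_nonneg _) habs (zero_le_one.trans hp)).trans
    (rpow_setIntegral_abs_le hp hcd hdu ((hLp c d hcd.le hS).mono_set Ioc_subset_Icc_self))

end LocACWith

lemma locACWith_primitive (S : Set ℝ) {g : ℝ → ℝ} (hg : Integrable g) (c : ℝ) :
    LocACWith S (fun t => ∫ s in c..t, g s) g := fun _ _ _ _ =>
  ⟨hg.integrableOn, fun _ _ => (intervalIntegral.integral_add_adjacent_intervals
    (hg.intervalIntegrable) (hg.intervalIntegrable)).symm⟩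

lemma LpLocOn.piecewise_const {p : ℝ} {S s : Set ℝ} {du : ℝ → ℝ} (h : LpLocOn p S du)
    [DecidablePred (· ∈ s)] (hs : MeasurableSet s) (m : ℝ) :
    LpLocOn p S (s.piecewise (fun _ => m) du) := by
  intro a b hab hS
  have hdu := h a b hab hS
  have heq : (fun t => |s.piecewise (fun _ => m) du t| ^ p)
      = fun t => |du t| ^ p + s.indicator (fun t => |m| ^ p - |du t| ^ p) t := by
    funext t
    by_cases ht : t ∈ s <;> simp [ht]
  rw [heq]
  exact hdu.add (((integrableOn_const measure_Icc_lt_top.ne).sub hdu).indicator hs)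

lemma intervalIntegral_indicator_Ioc_eq_zero {g : ℝ → ℝ} {c d t : ℝ} (hcd : c ≤ d)
    (hg : ∫ s in c..d, g s = 0) (ht : t ∉ Ioo c d) :
    ∫ s in c..t, (Ioc c d).indicator g s = 0 := by
  rcases le_or_gt t c with htc | hct
  · rw [intervalIntegral.integral_of_ge htc, setIntegral_indicator measurableSet_Ioc]
    simp [Ioc_inter_Ioc, htc, hcd]
  · have hdt : d ≤ t := not_lt.mp fun htd => ht ⟨hct, htd⟩
    rw [intervalIntegral.integral_of_le hct.le, setIntegral_indicator measurableSet_Ioc,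
      inter_eq_right.mpr (Ioc_subset_Ioc_right hdt), ← intervalIntegral.integral_of_le hcd, hg]

lemma IsQuasiminimizerWith.intervalIntegral_le {p Q : ℝ} {S : Set ℝ} {u du : ℝ → ℝ}
    (h : IsQuasiminimizerWith p Q S u du) (hQ : 0 ≤ Q) {c d : ℝ} (hcd : c < d)
    (hS : Icc c d ⊆ S) {v dv : ℝ → ℝ} (hdv : Measurable dv) (hv : LocACWith S v dv)
    (hvLp : LpLocOn p S dv) (hvu : ∀ t ∈ S \ Ioo c d, v t = u t) :
    ∫ t in c..d, |du t| ^ p ≤ Q * ∫ t in c..d, |dv t| ^ p := by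
  have hE := h.2.2.2 (Ioo c d) isOpen_Ioo (by rw [closure_Ioo hcd.ne]; exact isCompact_Icc)
    (by rw [closure_Ioo hcd.ne]; exact hS) v dv hdv hv hvLp hvu
  have hlint : ∀ f, LpLocOn p S f → ∫⁻ t in Ioo c d, ENNReal.ofReal (|f t| ^ p)
      = ENNReal.ofReal (∫ t in c..d, |f t| ^ p) := by
    intro f hf
    rw [intervalIntegral.integral_of_le hcd.le, integral_Ioc_eq_integral_Ioo,
      ofReal_integral_eq_lintegral_ofReal ((hf c d hcd.le hS).mono_set Ioo_subset_Icc_self)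
        (Eventually.of_forall fun t => by positivity)]
  rwa [hlint du h.2.2.1, hlint dv hvLp, ← ENNReal.ofReal_mul hQ,
    ENNReal.ofReal_le_ofReal_iff (mul_nonneg hQ (intervalIntegral.integral_nonneg hcd.le
      fun t _ => by positivity))] at hE

lemma IsQuasiminimizerWith.intervalIntegral_le_affine {p Q : ℝ} {S : Set ℝ} {u du : ℝ → ℝ}
    (h : IsQuasiminimizerWith p Q S u du) (hQ : 0 ≤ Q) {c d : ℝ} (hcd : c < d)
    (hS : Icc c d ⊆ S) :
    ∫ t in c..d, |du t| ^ p ≤ Q * (|u d - u c| ^ p / (d - c) ^ (p - 1)) := by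
  classical
  have hAC : LocACWith S u du := h.2.1
  have hLp : LpLocOn p S du := h.2.2.1
  obtain ⟨hint, hftc⟩ := hAC c d hcd.le hS
  have hdc : 0 < d - c := sub_pos.mpr hcd
  set m := (u d - u c) / (d - c) with hm
  set g : ℝ → ℝ := (Ioc c d).indicator fun t => m - du t with hg_def
  have hg : Integrable g := ((integrableOn_const measure_Ioc_lt_top.ne).sub
    (hint.mono_set Ioc_subset_Icc_self)).integrable_indicator measurableSet_Ioc
  have hmean : ∫ s in c..d, (m - du s) = 0 := by
    rw [intervalIntegral.integral_sub intervalIntegrable_const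
        (hAC.intervalIntegrable hcd.le hS (right_mem_Icc.mpr hcd.le)),
      intervalIntegral.integral_const, smul_eq_mul, hm, mul_div_cancel₀ _ hdc.ne',
      hftc d (right_mem_Icc.mpr hcd.le)]
    ring
  have hdv : (Ioc c d).piecewise (fun _ => m) du = du + g := by
    funext t
    by_cases ht : t ∈ Ioc c d <;> simp [hg_def, ht]
  -- The competitor `u + ∫_c^t g` has slope `m` on `(c, d]` and equals `u` off `(c, d)`.
  have hACv : LocACWith S (u + fun t => ∫ s in c..t, g s)
      ((Ioc c d).piecewise (fun _ => m) du) :=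
    hdv ▸ hAC.add (locACWith_primitive S hg c)
  have hbd : ∀ t ∈ S \ Ioo c d, (u + fun t => ∫ s in c..t, g s) t = u t := fun t ht => by
    simp [g, intervalIntegral_indicator_Ioc_eq_zero hcd.le hmean ht.2]
  calc ∫ t in c..d, |du t| ^ p
      ≤ Q * ∫ t in c..d, |(Ioc c d).piecewise (fun _ => m) du t| ^ p :=
        h.intervalIntegral_le hQ hcd hS
          (measurable_const.piecewise measurableSet_Ioc h.1) hACv
          (hLp.piecewise_const measurableSet_Ioc m) hbd
    _ = Q * (|m| ^ p * (d - c)) := by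
        rw [intervalIntegral.integral_of_le hcd.le, setIntegral_congr_fun measurableSet_Ioc
          fun t ht => by rw [piecewise_eq_of_mem _ _ _ ht], setIntegral_const,
          Real.volume_real_Ioc_of_le hcd.le, smul_eq_mul, mul_comm (d - c)]
    _ = Q * (|u d - u c| ^ p / (d - c) ^ (p - 1)) := by
        rw [hm, abs_div, Real.div_rpow (abs_nonneg _) (abs_nonneg _), abs_of_pos hdc,
          Real.rpow_sub_one hdc.ne']
        field_simp

lemma IsQuasiminimizerWith.energy_split_le {p Q : ℝ} {S : Set ℝ} {u du : ℝ → ℝ}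
    (hp : 1 ≤ p) (h : IsQuasiminimizerWith p Q S u du) (hQ : 0 ≤ Q) {c e d : ℝ}
    (hce : c < e) (hed : e < d) (hS : Icc c d ⊆ S) :
    |u e - u c| ^ p / (e - c) ^ (p - 1) + |u d - u e| ^ p / (d - e) ^ (p - 1)
      ≤ Q * (|u d - u c| ^ p / (d - c) ^ (p - 1)) := by
  have hcd : c ≤ d := hce.le.trans hed.le
  have hAC : LocACWith S u du := h.2.1
  have hLp : LpLocOn p S du := h.2.2.1
  have hint := hLp c d hcd hS
  have he : e ∈ Icc c d := ⟨hce.le, hed.le⟩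
  calc _ ≤ (∫ t in c..e, |du t| ^ p) + ∫ t in e..d, |du t| ^ p :=
        add_le_add
          (hAC.abs_sub_rpow_div_le_intervalIntegral hp hLp hce
            ((Icc_subset_Icc_right hed.le).trans hS))
          (hAC.abs_sub_rpow_div_le_intervalIntegral hp hLp hed
            ((Icc_subset_Icc_left hce.le).trans hS))
    _ = ∫ t in c..d, |du t| ^ p := intervalIntegral.integral_add_adjacent_intervals
        (hint.mono_set (uIcc_subset_Icc (left_mem_Icc.mpr hcd) he)).intervalIntegrable
        (hint.mono_set (uIcc_subset_Icc he (right_mem_Icc.mpr hcd))).intervalIntegrable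
    _ ≤ _ := h.intervalIntegral_le_affine hQ (hce.trans hed) hS

lemma MonotoneOn.le_of_tendsto_nhdsLT {U : ℝ → ℝ} {c x a t : ℝ}
    (hU : MonotoneOn U (Ioo c x)) (ha : Tendsto U (𝓝[<] x) (𝓝 a)) (ht : t ∈ Ioo c x) :
    U t ≤ a :=
  ge_of_tendsto ha <| eventually_of_mem (Ioo_mem_nhdsLT ht.2) fun _ hs =>
    hU ht ⟨ht.1.trans hs.1, hs.2⟩ hs.1.le

lemma Filter.Tendsto.abs_rpow_div_rpow {α : Type*} {l : Filter α} {f g : α → ℝ} {A B p : ℝ}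
    (hf : Tendsto f l (𝓝 A)) (hg : Tendsto g l (𝓝 B)) (hB : 0 < B) (hp : 1 ≤ p) :
    Tendsto (fun t => |f t| ^ p / g t ^ (p - 1)) l (𝓝 (|A| ^ p / B ^ (p - 1))) :=
  (hf.abs.rpow_const (Or.inr (by linarith))).div (hg.rpow_const (Or.inr (by linarith)))
    (by positivity)

lemma one_sub_one_div_rpow_one_sub {x : ℝ} (hx : 1 < x) (p : ℝ) :
    (1 - 1 / x) ^ (1 - p) = x ^ (p - 1) / (x - 1) ^ (p - 1) := by
  rw [show 1 - 1 / x = (x - 1) / x by field_simp, show 1 - p = -(p - 1) by ring,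
    Real.rpow_neg (by positivity), Real.div_rpow (by linarith) (by linarith), inv_div]

theorem quasiminimizer_extension_lower_bound_general
    (p Q x : ℝ) (hp : 1 < p) (hQ : 1 ≤ Q) (hx : 1 < x)
    (U : ℝ → ℝ) (hmono : MonotoneOn U (Set.Ioo 0 x))
    (hqm : IsQuasiminimizerOn p Q (Set.Ioo 0 x) U)
    (hid : ∀ t : ℝ, 0 < t → t ≤ 1 → U t = t)
    (a : ℝ) (ha : Filter.Tendsto U (nhdsWithin x (Set.Ioo 0 x)) (nhds a)) :
    x ^ (p - 1) + (a - 1) ^ p * (1 - 1 / x) ^ (1 - p) ≤ Q * a ^ p := by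
  obtain ⟨du, hqw⟩ := hqm
  rw [nhdsWithin_Ioo_eq_nhdsLT (by linarith)] at ha
  have ha1 : 1 ≤ a := hid 1 one_pos le_rfl ▸ hmono.le_of_tendsto_nhdsLT ha ⟨one_pos, hx⟩
  have hsplit : ∀ᶠ b in 𝓝[<] x, |1 - (x - b)| ^ p / (1 - (x - b)) ^ (p - 1)
      + |U b - 1| ^ p / (b - 1) ^ (p - 1)
      ≤ Q * (|U b - (x - b)| ^ p / (b - (x - b)) ^ (p - 1)) := by
    filter_upwards [Ioo_mem_nhdsLT (show max 1 (x - 1) < x by simp [hx])] with b ⟨hb, hbx⟩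
    rw [max_lt_iff] at hb
    have := hqw.energy_split_le hp.le (by linarith) (c := x - b) (e := 1) (d := b)
      (by linarith) hb.1 fun t ht => ⟨by linarith [ht.1], ht.2.trans_lt hbx⟩
    rwa [hid (x - b) (by linarith) (by linarith), hid 1 one_pos le_rfl] at this
  have hb : Tendsto (fun b => b) (𝓝[<] x) (𝓝 x) := tendsto_id.mono_left nhdsWithin_le_nhds
  have hε : Tendsto (fun b => x - b) (𝓝[<] x) (𝓝 (x - x)) := tendsto_const_nhds.sub hb
  have hlim := le_of_tendsto_of_tendsto
    (((tendsto_const_nhds.sub hε).abs_rpow_div_rpow (tendsto_const_nhds.sub hε) (by simp)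
        hp.le).add ((ha.sub_const 1).abs_rpow_div_rpow (hb.sub_const 1) (by linarith) hp.le))
    (((ha.sub hε).abs_rpow_div_rpow (hb.sub hε) (by simp; linarith) hp.le).const_mul Q) hsplit
  simp only [sub_self, sub_zero, abs_one, Real.one_rpow, div_one,
    abs_of_nonneg (sub_nonneg.mpr ha1), abs_of_nonneg (zero_le_one.trans ha1)] at hlim
  rw [one_sub_one_div_rpow_one_sub hx]
  calc x ^ (p - 1) + (a - 1) ^ p * (x ^ (p - 1) / (x - 1) ^ (p - 1))
      = x ^ (p - 1) * (1 + (a - 1) ^ p / (x - 1) ^ (p - 1)) := by ring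
    _ ≤ x ^ (p - 1) * (Q * (a ^ p / x ^ (p - 1))) := by gcongr
    _ = Q * a ^ p := by field_simp

/-- **Energy lower bound for quasiminimizing extensions of the identity.**
If `U` is a nondecreasing continuous `Q`-quasiminimizer on `(0,x)`, `x > 1`, with
`U(t) = t` for `0 < t ≤ 1` and `U(t) → a` as `t → x⁻`, then
`Q a^p ≥ x^{p-1} + (a-1)^p (1 - 1/x)^{1-p}`. -/
theorem quasiminimizer_extension_lower_bound
    (p Q x : ℝ) (hp : 1 < p) (hQ : 1 ≤ Q) (hx : 1 < x)
    (U : ℝ → ℝ) (hmono : MonotoneOn U (Set.Ioo 0 x))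
    (hcont : ContinuousOn U (Set.Ioo 0 x))
    (hqm : IsQuasiminimizerOn p Q (Set.Ioo 0 x) U)
    (hid : ∀ t : ℝ, 0 < t → t ≤ 1 → U t = t)
    (a : ℝ) (ha : Filter.Tendsto U (nhdsWithin x (Set.Ioo 0 x)) (nhds a)) :
    x ^ (p - 1) + (a - 1) ^ p * (1 - 1 / x) ^ (1 - p) ≤ Q * a ^ p :=
  quasiminimizer_extension_lower_bound_general p Q x hp hQ hx U hmono hqm hid a ha
end

section
/- Let n ≥ 2 and C ≥ 1. Let F ⊂ ℝⁿ be a bounded closed set and let u : ℝⁿ \ F → ℝ be continuous, bounded, and satisfy the translate-Harnack property with constant C on ℝⁿ \ F. Then lim_{|x|→∞} u(x) exists (as a finite real number). -/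
open MeasureTheory Set

/-- `u` satisfies the translate-Harnack property with constant `C` on `D ⊆ ℝⁿ`:
for every `c ∈ ℝ` and every ball `B(y,r)` with `B(y,6r) ⊆ D` on which `u + c ≥ 0`,
one has `sup_{B(y,r)} (u + c) ≤ C inf_{B(y,r)} (u + c)`. -/
def TranslateHarnack {n : ℕ} (C : ℝ) (D : Set (EuclideanSpace ℝ (Fin n)))
    (u : EuclideanSpace ℝ (Fin n) → ℝ) : Prop :=
  ∀ c : ℝ, ∀ y : EuclideanSpace ℝ (Fin n), ∀ r : ℝ, 0 < r →
    Metric.ball y (6 * r) ⊆ D → (∀ z ∈ Metric.ball y (6 * r), 0 ≤ u z + c) →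
    ∀ z₁ ∈ Metric.ball y r, ∀ z₂ ∈ Metric.ball y r, u z₁ + c ≤ C * (u z₂ + c)

/-!
Let `L` be the `liminf` of `u` at infinity. The unit sphere is compact and, as `n ≥ 2`,
connected, so any two of its points are joined by a chain of a fixed number `N` of steps of
length `< 1/12`. Scaling such a chain to the sphere of radius `s` and applying the Harnack
inequality on balls of radius `s/12` along it gives `u x - μ ≤ C ^ N * (u y - μ)` whenever
`‖x‖ = ‖y‖ = s` and `μ ≤ u` outside the ball of radius `s/2`.
Far out `u > L - ε`, and by the strong minimum principle on annuli every large sphere contains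
a point where `u ≤ L + ε`; hence eventually `u ≤ L - ε + 2 C ^ N ε`, so `limsup u ≤ L`.
-/

open Metric Filter Bornology

section ChainWithin

variable {α β : Type*} [PseudoMetricSpace α] [PseudoMetricSpace β]
  {S : Set α} {δ : ℝ} {m k : ℕ} {x y w : α}

def ChainWithin (S : Set α) (δ : ℝ) (m : ℕ) (x y : α) : Prop :=
  ∃ z : ℕ → α, z 0 = x ∧ z m = y ∧ (∀ i ≤ m, z i ∈ S) ∧ ∀ i < m, dist (z i) (z (i + 1)) < δ

namespace ChainWithin

theorem refl (hx : x ∈ S) (hδ : 0 < δ) : ChainWithin S δ m x x :=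
  ⟨fun _ ↦ x, rfl, rfl, fun _ _ ↦ hx, fun _ _ ↦ by simpa using hδ⟩

theorem of_dist_lt (hx : x ∈ S) (hy : y ∈ S) (h : dist x y < δ) : ChainWithin S δ 1 x y :=
  ⟨fun i ↦ if i = 0 then x else y, rfl, rfl, fun i _ ↦ by dsimp only; split_ifs <;> assumption,
    fun i hi ↦ by simpa [Nat.lt_one_iff.1 hi] using h⟩

theorem right_mem (h : ChainWithin S δ m x y) : y ∈ S := by
  obtain ⟨z, -, hzm, hzS, -⟩ := h
  exact hzm ▸ hzS m le_rfl

theorem symm (h : ChainWithin S δ m x y) : ChainWithin S δ m y x := by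
  obtain ⟨z, hz0, hzm, hzS, hzd⟩ := h
  refine ⟨fun i ↦ z (m - i), by simpa using hzm, by simpa using hz0,
    fun i _ ↦ hzS _ (Nat.sub_le m i), fun i hi ↦ ?_⟩
  dsimp only
  rw [show m - i = m - (i + 1) + 1 by omega, dist_comm]
  exact hzd _ (by omega)

theorem trans (h : ChainWithin S δ m x y) (h' : ChainWithin S δ k y w) :
    ChainWithin S δ (m + k) x w := by
  obtain ⟨z, hz0, hzm, hzS, hzd⟩ := h
  obtain ⟨z', hz'0, hz'k, hz'S, hz'd⟩ := h'
  have hjoin : ∀ i, m ≤ i → (if i ≤ m then z i else z' (i - m)) = z' (i - m) := by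
    intro i hi
    split_ifs with him
    · rw [le_antisymm him hi, hzm, Nat.sub_self, hz'0]
    · rfl
  refine ⟨fun i ↦ if i ≤ m then z i else z' (i - m), by simp [hz0], ?_, fun i hi ↦ ?_,
    fun i hi ↦ ?_⟩
  · dsimp only
    rw [hjoin (m + k) (Nat.le_add_right m k), Nat.add_sub_cancel_left, hz'k]
  · dsimp only
    split_ifs with him
    · exact hzS i him
    · exact hz'S _ (by omega)
  · rcases lt_or_ge i m with him | him
    · simpa [him.le, Nat.succ_le_of_lt him] using hzd i him
    · dsimp only
      rw [hjoin i him, hjoin (i + 1) (by omega), Nat.sub_add_comm him]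
      exact hz'd _ (by omega)

theorem mono_steps (h : ChainWithin S δ m x y) (hδ : 0 < δ) (hmk : m ≤ k) :
    ChainWithin S δ k x y := by
  simpa [Nat.add_sub_cancel' hmk] using h.trans (refl (m := k - m) h.right_mem hδ)

theorem map {T : Set β} {f : α → β} {K : ℝ} (h : ChainWithin S δ m x y) (hK : 0 < K)
    (hf : ∀ a b, dist (f a) (f b) ≤ K * dist a b) (hST : MapsTo f S T) :
    ChainWithin T (K * δ) m (f x) (f y) := by
  obtain ⟨z, hz0, hzm, hzS, hzd⟩ := h
  exact ⟨f ∘ z, by simp [hz0], by simp [hzm], fun i hi ↦ hST (hzS i hi),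
    fun i hi ↦ (hf _ _).trans_lt (mul_lt_mul_of_pos_left (hzd i hi) hK)⟩

end ChainWithin

theorem IsPreconnected.exists_chainWithin (hS : IsPreconnected S) (hδ : 0 < δ) (hx : x ∈ S)
    (hy : y ∈ S) : ∃ m, ChainWithin S δ m x y :=
  hS.induction₂ (fun a b ↦ ∃ m, ChainWithin S δ m a b)
    (fun a ha ↦ eventually_nhdsWithin_iff.2 <|
      mem_of_superset (ball_mem_nhds a hδ) fun _ hb hbS ↦ ⟨1, .of_dist_lt ha hbS (mem_ball'.1 hb)⟩)
    (fun _ _ _ _ _ _ ⟨_, h⟩ ⟨_, h'⟩ ↦ ⟨_, h.trans h'⟩)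
    (fun _ _ _ _ ⟨m, h⟩ ↦ ⟨m, h.symm⟩) hx hy

theorem IsCompact.exists_forall_chainWithin (hK : IsCompact S) (hS : IsPreconnected S)
    (hδ : 0 < δ) : ∃ N, ∀ x ∈ S, ∀ y ∈ S, ChainWithin S δ N x y := by
  rcases S.eq_empty_or_nonempty with rfl | ⟨b, hb⟩
  · exact ⟨0, by simp⟩
  obtain ⟨t, htS, ht, hcover⟩ := hK.finite_cover_balls hδ
  obtain ⟨M, hM⟩ := (ht.eventually_all (l := atTop)).2 (fun v hv ↦
    let ⟨m, hm⟩ := hS.exists_chainWithin hδ hb (htS hv)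
    eventually_atTop.2 ⟨m, fun _ hk ↦ hm.mono_steps hδ hk⟩) |>.exists
  have hreach : ∀ y ∈ S, ChainWithin S δ (M + 1) b y := fun y hy ↦ by
    obtain ⟨v, hv, hyv⟩ := mem_iUnion₂.1 (hcover hy)
    exact (hM v hv).trans (.of_dist_lt (htS hv) hy (mem_ball'.1 hyv))
  exact ⟨(M + 1) + (M + 1), fun x hx y hy ↦ (hreach x hx).symm.trans (hreach y hy)⟩

end ChainWithin

theorem isPreconnected_norm_preimage_Ioo {E : Type*} [NormedAddCommGroup E] [NormedSpace ℝ E]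
    (h : 1 < Module.rank ℝ E) {a b : ℝ} (ha : 0 ≤ a) :
    IsPreconnected (norm ⁻¹' Ioo a b : Set E) := by
  convert (isPreconnected_Ioo.prod (isPreconnected_sphere h (0 : E) 1)).image
    (fun p : ℝ × E ↦ p.1 • p.2) (continuous_fst.smul continuous_snd).continuousOn using 1
  ext x
  constructor
  · intro hx
    have hx0 : 0 < ‖x‖ := ha.trans_lt hx.1
    refine ⟨(‖x‖, ‖x‖⁻¹ • x), ⟨hx, ?_⟩, by simp [smul_smul, hx0.ne']⟩
    simp [norm_smul, hx0.ne']
  · rintro ⟨⟨t, v⟩, ⟨ht, hv⟩, rfl⟩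
    have ht0 : 0 < t := ha.trans_lt ht.1
    simpa [norm_smul, abs_of_pos ht0, mem_sphere_zero_iff_norm.1 hv] using ht

theorem one_lt_rank_euclideanSpace {n : ℕ} (hn : 2 ≤ n) :
    1 < Module.rank ℝ (EuclideanSpace ℝ (Fin n)) := by
  rw [← Module.finrank_eq_rank, finrank_euclideanSpace_fin]
  exact_mod_cast hn

namespace TranslateHarnack

variable {n : ℕ} {C : ℝ} {D : Set (EuclideanSpace ℝ (Fin n))}
  {u : EuclideanSpace ℝ (Fin n) → ℝ}

theorem sub_le_mul_sub (hu : TranslateHarnack C D u) {y : EuclideanSpace ℝ (Fin n)} {r μ : ℝ}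
    (hr : 0 < r) (hD : ball y (6 * r) ⊆ D) (hμ : ∀ w ∈ ball y (6 * r), μ ≤ u w)
    {z₁ z₂ : EuclideanSpace ℝ (Fin n)} (h₁ : z₁ ∈ ball y r) (h₂ : z₂ ∈ ball y r) :
    u z₁ - μ ≤ C * (u z₂ - μ) := by
  simpa [sub_eq_add_neg] using
    hu (-μ) y r hr hD (fun w hw ↦ by linarith [hμ w hw]) z₁ h₁ z₂ h₂

theorem sub_le_pow_mul_sub_of_chainWithin (hu : TranslateHarnack C D u) (hC : 0 ≤ C)
    {S : Set (EuclideanSpace ℝ (Fin n))} {r μ : ℝ} (hr : 0 < r)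
    (hD : ∀ p ∈ S, ball p (6 * r) ⊆ D) (hμ : ∀ p ∈ S, ∀ w ∈ ball p (6 * r), μ ≤ u w)
    {m : ℕ} {x y : EuclideanSpace ℝ (Fin n)} (h : ChainWithin S r m x y) :
    u x - μ ≤ C ^ m * (u y - μ) := by
  obtain ⟨z, rfl, rfl, hzS, hzd⟩ := h
  suffices ∀ i ≤ m, u (z 0) - μ ≤ C ^ i * (u (z i) - μ) from this m le_rfl
  intro i
  induction i with
  | zero => simp
  | succ i ih =>
    intro hi
    have hstep : u (z i) - μ ≤ C * (u (z (i + 1)) - μ) :=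
      hu.sub_le_mul_sub hr (hD _ (hzS i (by omega))) (hμ _ (hzS i (by omega)))
        (mem_ball_self hr) (by rw [mem_ball, dist_comm]; exact hzd i hi)
    calc u (z 0) - μ ≤ C ^ i * (u (z i) - μ) := ih (by omega)
      _ ≤ C ^ i * (C * (u (z (i + 1)) - μ)) := by gcongr
      _ = C ^ (i + 1) * (u (z (i + 1)) - μ) := by ring

theorem sub_le_pow_mul_sub_of_norm_eq (hu : TranslateHarnack C D u) (hC : 0 ≤ C) {N : ℕ}
    (hN : ∀ x ∈ sphere (0 : EuclideanSpace ℝ (Fin n)) 1, ∀ y ∈ sphere 0 1,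
      ChainWithin (sphere 0 1) (1 / 12) N x y)
    {s μ : ℝ} (hs : 0 < s) (hD : ∀ w, s / 2 < ‖w‖ → w ∈ D) (hμ : ∀ w, s / 2 < ‖w‖ → μ ≤ u w)
    {x y : EuclideanSpace ℝ (Fin n)} (hx : ‖x‖ = s) (hy : ‖y‖ = s) :
    u x - μ ≤ C ^ N * (u y - μ) := by
  have hunit : ∀ {v : EuclideanSpace ℝ (Fin n)}, ‖v‖ = s → s⁻¹ • v ∈ sphere 0 1 := fun hv ↦ by
    simp [norm_smul, hv, abs_of_pos hs, hs.ne']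
  have hchain := (hN _ (hunit hx) _ (hunit hy)).map (T := sphere 0 s) (f := (s • ·)) hs
    (fun a b ↦ by simp [dist_smul₀, abs_of_pos hs]) (fun v hv ↦ by
      simp [norm_smul, abs_of_pos hs, mem_sphere_zero_iff_norm.1 hv])
  simp only [smul_smul, mul_inv_cancel₀ hs.ne', one_smul] at hchain
  have hfar : ∀ p ∈ sphere (0 : EuclideanSpace ℝ (Fin n)) s, ∀ w ∈ ball p (6 * (s * (1 / 12))),
      s / 2 < ‖w‖ := fun p hp w hw ↦ by
    have := norm_sub_norm_le p w
    rw [mem_sphere_zero_iff_norm.1 hp, norm_sub_rev, ← dist_eq_norm] at this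
    linarith [mem_ball.1 hw]
  exact hu.sub_le_pow_mul_sub_of_chainWithin hC (by positivity)
    (fun p hp w hw ↦ hD w (hfar p hp w hw)) (fun p hp w hw ↦ hμ w (hfar p hp w hw)) hchain

theorem eqOn_of_isMinOn (hu : TranslateHarnack C D u) {U : Set (EuclideanSpace ℝ (Fin n))}
    (hU : IsOpen U) (hUc : IsPreconnected U) (hUD : U ⊆ D) (hcont : ContinuousOn u U)
    {x₀ : EuclideanSpace ℝ (Fin n)} (hx₀ : x₀ ∈ U) (hmin : IsMinOn u U x₀) :
    EqOn u (fun _ ↦ u x₀) U := by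
  have hlevel_open : ∀ x ∈ U, u x = u x₀ → x ∈ interior {w | u w = u x₀} := by
    intro x hx hux
    obtain ⟨r, hr, hball⟩ := Metric.isOpen_iff.1 hU x hx
    have hr6 : 0 < r / 6 := by positivity
    have hball6 : ball x (6 * (r / 6)) ⊆ U := by rwa [mul_div_cancel₀ r (by norm_num)]
    refine mem_interior_iff_mem_nhds.2 (mem_of_superset (ball_mem_nhds x hr6) fun w hw ↦ ?_)
    have hle := hu.sub_le_mul_sub hr6 (hball6.trans hUD) (fun w hw ↦ hmin (hball6 hw)) hw
      (mem_ball_self hr6)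
    rw [hux, sub_self, mul_zero, sub_nonpos] at hle
    exact le_antisymm hle (hmin (hball6 (ball_subset_ball (by linarith) hw)))
  have hsub := hUc.subset_left_of_subset_union isOpen_interior
    (hcont.isOpen_inter_preimage hU isOpen_compl_singleton)
    (disjoint_left.2 fun x hx hx' ↦ hx'.2 (interior_subset (s := {w | u w = u x₀}) hx))
    (fun x hx ↦ (em (u x = u x₀)).imp (hlevel_open x hx) fun h ↦ ⟨hx, h⟩)
    ⟨x₀, hx₀, hlevel_open x₀ hx₀ rfl⟩
  exact fun x hx ↦ interior_subset (s := {w | u w = u x₀}) (hsub hx)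

theorem lt_on_annulus_of_lt_on_boundary (hu : TranslateHarnack C D u) (hn : 2 ≤ n) {a b t : ℝ}
    (ha : 0 ≤ a) (hD : norm ⁻¹' Icc a b ⊆ D) (hcont : ContinuousOn u (norm ⁻¹' Icc a b))
    (hbdry : ∀ x, ‖x‖ = a ∨ ‖x‖ = b → t < u x) {y₀ : EuclideanSpace ℝ (Fin n)}
    (hy₀ : y₀ ∈ norm ⁻¹' Ioo a b) (hty₀ : t < u y₀) :
    ∀ x ∈ norm ⁻¹' Icc a b, t < u x := by
  have hIoo : norm ⁻¹' Ioo a b ⊆ (norm ⁻¹' Icc a b : Set (EuclideanSpace ℝ (Fin n))) :=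
    preimage_mono Ioo_subset_Icc_self
  have hcompact : IsCompact (norm ⁻¹' Icc a b : Set (EuclideanSpace ℝ (Fin n))) :=
    (isCompact_closedBall 0 b).of_isClosed_subset (isClosed_Icc.preimage continuous_norm)
      fun x hx ↦ mem_closedBall_zero_iff.2 hx.2
  obtain ⟨x₀, hx₀, hmin⟩ := hcompact.exists_isMinOn ⟨y₀, hIoo hy₀⟩ hcont
  by_contra! h
  obtain ⟨x, hx, hxt⟩ := h
  have hx₀t : u x₀ ≤ t := (hmin hx).trans hxt
  have hx₀Ioo : x₀ ∈ norm ⁻¹' Ioo a b :=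
    ⟨hx₀.1.lt_of_ne fun h ↦ (hbdry x₀ (.inl h.symm)).not_ge hx₀t,
      hx₀.2.lt_of_ne fun h ↦ (hbdry x₀ (.inr h)).not_ge hx₀t⟩
  have hconst := hu.eqOn_of_isMinOn (isOpen_Ioo.preimage continuous_norm)
    (isPreconnected_norm_preimage_Ioo (one_lt_rank_euclideanSpace hn) ha) (hIoo.trans hD)
    (hcont.mono hIoo) hx₀Ioo (hmin.on_subset hIoo)
  linarith [hconst hy₀]

theorem eventually_lt_of_frequently_lt_on_sphere (hu : TranslateHarnack C D u) (hn : 2 ≤ n)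
    (hD : D ∈ cobounded (EuclideanSpace ℝ (Fin n))) (hcont : ContinuousOn u D) {t : ℝ}
    (h : ∃ᶠ s in atTop, ∀ x : EuclideanSpace ℝ (Fin n), ‖x‖ = s → t < u x) :
    ∀ᶠ x in cobounded (EuclideanSpace ℝ (Fin n)), t < u x := by
  obtain ⟨R, -, hR⟩ := hasBasis_cobounded_norm.eventually_iff.1 hD
  obtain ⟨s₁, hs₁, hbad₁⟩ := h.forall_exists_of_atTop (max R 0)
  refine hasBasis_cobounded_norm.eventually_iff.2 ⟨s₁, trivial, fun x hx ↦ ?_⟩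
  have hx : s₁ ≤ ‖x‖ := hx
  obtain ⟨s₂, hs₂, hbad₂⟩ := h.forall_exists_of_atTop (‖x‖ + 1)
  obtain ⟨s₃, hs₃, hbad₃⟩ := h.forall_exists_of_atTop (s₂ + 1)
  have hAD : norm ⁻¹' Icc s₁ s₃ ⊆ D := fun w hw ↦
    hR ((le_max_left R 0).trans (hs₁.trans hw.1))
  have : NeZero n := ⟨by omega⟩
  obtain ⟨y₀, hy₀⟩ := exists_norm_eq (EuclideanSpace ℝ (Fin n)) (c := s₂)
    (by linarith [norm_nonneg x])
  exact hu.lt_on_annulus_of_lt_on_boundary hn ((le_max_right R 0).trans hs₁) hAD (hcont.mono hAD)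
    (fun w hw ↦ hw.elim (hbad₁ w) (hbad₃ w))
    (y₀ := y₀) (by rw [mem_preimage, hy₀]; exact ⟨by linarith, by linarith⟩) (hbad₂ _ hy₀)
    x ⟨hx, by linarith⟩

theorem eventually_exists_norm_eq_le_of_liminf_lt (hu : TranslateHarnack C D u) (hn : 2 ≤ n)
    (hD : D ∈ cobounded (EuclideanSpace ℝ (Fin n))) (hcont : ContinuousOn u D)
    (hbdd : IsCoboundedUnder (· ≥ ·) (cobounded (EuclideanSpace ℝ (Fin n))) u) {t : ℝ}
    (ht : liminf u (cobounded (EuclideanSpace ℝ (Fin n))) < t) :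
    ∀ᶠ s in atTop, ∃ y : EuclideanSpace ℝ (Fin n), ‖y‖ = s ∧ u y ≤ t := by
  by_contra h
  simp only [not_eventually, not_exists, not_and, not_le] at h
  exact ht.not_ge <| le_liminf_of_le hbdd <|
    (hu.eventually_lt_of_frequently_lt_on_sphere hn hD hcont h).mono fun _ ↦ le_of_lt

theorem eventually_sub_le_pow_mul_sub (hu : TranslateHarnack C D u) (hC : 0 ≤ C) {N : ℕ}
    (hN : ∀ x ∈ sphere (0 : EuclideanSpace ℝ (Fin n)) 1, ∀ y ∈ sphere 0 1,
      ChainWithin (sphere 0 1) (1 / 12) N x y)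
    (hD : D ∈ cobounded (EuclideanSpace ℝ (Fin n))) {μ t : ℝ}
    (hμ : ∀ᶠ w in cobounded (EuclideanSpace ℝ (Fin n)), μ ≤ u w)
    (ht : ∀ᶠ s in atTop, ∃ y : EuclideanSpace ℝ (Fin n), ‖y‖ = s ∧ u y ≤ t) :
    ∀ᶠ x in cobounded (EuclideanSpace ℝ (Fin n)), u x - μ ≤ C ^ N * (t - μ) := by
  obtain ⟨R, -, hR⟩ := hasBasis_cobounded_norm.eventually_iff.1 (hμ.and hD)
  obtain ⟨S₀, hS₀⟩ := eventually_atTop.1 ht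
  refine hasBasis_cobounded_norm.eventually_iff.2
    ⟨max (max (2 * R) 1) S₀, trivial, fun x hx ↦ ?_⟩
  have hx : max (max (2 * R) 1) S₀ ≤ ‖x‖ := hx
  obtain ⟨y, hy, hyt⟩ := hS₀ ‖x‖ ((le_max_right _ _).trans hx)
  have hfar : ∀ w : EuclideanSpace ℝ (Fin n), ‖x‖ / 2 < ‖w‖ → R ≤ ‖w‖ := fun w hw ↦ by
    linarith [le_max_left (2 * R) 1, le_max_left (max (2 * R) 1) S₀]
  calc u x - μ ≤ C ^ N * (u y - μ) :=
        hu.sub_le_pow_mul_sub_of_norm_eq hC hN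
          (by linarith [le_max_right (2 * R) 1, le_max_left (max (2 * R) 1) S₀])
          (fun w hw ↦ (hR (hfar w hw)).2) (fun w hw ↦ (hR (hfar w hw)).1) rfl hy
    _ ≤ C ^ N * (t - μ) := by gcongr

end TranslateHarnack

theorem limit_at_infinity_of_translateHarnack_general
    (n : ℕ) (hn : 2 ≤ n) (C : ℝ) (hC : 1 ≤ C)
    (F : Set (EuclideanSpace ℝ (Fin n)))
    (hFbdd : Bornology.IsBounded F)
    (u : EuclideanSpace ℝ (Fin n) → ℝ)
    (hcont : ContinuousOn u Fᶜ) (hbdd : ∃ M : ℝ, ∀ z ∈ Fᶜ, |u z| ≤ M)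
    (hharnack : TranslateHarnack C Fᶜ u) :
    ∃ L : ℝ, Filter.Tendsto u (Filter.cocompact (EuclideanSpace ℝ (Fin n))) (nhds L) := by
  have : NeZero n := ⟨by omega⟩
  obtain ⟨N, hN⟩ := (isCompact_sphere (0 : EuclideanSpace ℝ (Fin n)) 1).exists_forall_chainWithin
    (isPreconnected_sphere (one_lt_rank_euclideanSpace hn) 0 1) (by norm_num : (0 : ℝ) < 1 / 12)
  have hD : Fᶜ ∈ cobounded (EuclideanSpace ℝ (Fin n)) := isBounded_def.1 hFbdd
  obtain ⟨M, hM⟩ := hbdd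
  have hle : IsBoundedUnder (· ≤ ·) (cobounded _) u :=
    isBoundedUnder_of_eventually_le (a := M) (mem_of_superset hD fun z hz ↦ (abs_le.1 (hM z hz)).2)
  have hge : IsBoundedUnder (· ≥ ·) (cobounded _) u :=
    isBoundedUnder_of_eventually_ge (a := -M) (mem_of_superset hD fun z hz ↦ (abs_le.1 (hM z hz)).1)
  rw [← cobounded_eq_cocompact]
  set L := liminf u (cobounded (EuclideanSpace ℝ (Fin n)))
  refine ⟨L, tendsto_of_le_liminf_of_limsup_le le_rfl ?_ hle hge⟩
  refine le_of_forall_pos_le_add fun ε hε ↦ ?_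
  have hCN : 0 < C ^ N := pow_pos (by linarith) N
  set δ := ε / (2 * C ^ N)
  have hδ : 0 < δ := by positivity
  have hμ := eventually_lt_of_lt_liminf (sub_lt_self L hδ) hge
  have ht := hharnack.eventually_exists_norm_eq_le_of_liminf_lt hn hD hcont
    hle.isCoboundedUnder_ge (lt_add_of_pos_right L hδ)
  refine limsup_le_of_le hge.isCoboundedUnder_le
    ((hharnack.eventually_sub_le_pow_mul_sub (by linarith) hN hD (hμ.mono fun _ ↦ le_of_lt)
      ht).mono fun x hx ↦ ?_)
  have hCδ : C ^ N * (L + δ - (L - δ)) = ε := by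
    simp only [δ]; field_simp; ring
  linarith

/-- **Limit at infinity for bounded functions with the Harnack property.**
If `F ⊂ ℝⁿ`, `n ≥ 2`, is bounded and closed, and `u` is continuous, bounded and
satisfies the translate-Harnack property with constant `C` on `ℝⁿ \ F`, then
`lim_{x→∞} u(x)` exists. -/
theorem limit_at_infinity_of_translateHarnack
    (n : ℕ) (hn : 2 ≤ n) (C : ℝ) (hC : 1 ≤ C)
    (F : Set (EuclideanSpace ℝ (Fin n)))
    (hFbdd : Bornology.IsBounded F) (hFcl : IsClosed F)
    (u : EuclideanSpace ℝ (Fin n) → ℝ)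
    (hcont : ContinuousOn u Fᶜ) (hbdd : ∃ M : ℝ, ∀ z ∈ Fᶜ, |u z| ≤ M)
    (hharnack : TranslateHarnack C Fᶜ u) :
    ∃ L : ℝ, Filter.Tendsto u (Filter.cocompact (EuclideanSpace ℝ (Fin n))) (nhds L) :=
  limit_at_infinity_of_translateHarnack_general n hn C hC F hFbdd u hcont hbdd hharnack
end

section
/- Let μ be a Borel measure on ℝⁿ that is positive and finite on all open balls, let Ω ⊆ ℝⁿ be open, and let u : Ω → (-∞, ∞] be lower semicontinuous. Suppose there exist σ > 0 and c > 0 such that the following weak Harnack property holds: for every open ball B(y,r) with B(y,5r) ⊆ Ω and every κ ∈ ℝ with u + κ > 0 on B(y,5r), one has ((1/μ(B(y,r))) ∫_{B(y,r)} (u+κ)^σ dμ)^{1/σ} ≤ c · inf_{B(y,3r)} (u + κ). Let x ∈ Ω and α ∈ ℝ, and assume that limsup_{r→0} μ({y ∈ B(x,r) : u(y) ≥ α}) / μ(B(x,r)) > 0. Then u(x) ≥ α. -/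
/-!
Suppose `u x = b < α`. By lower semicontinuity, `u > b - ε` near `x`, so the weak Harnack
inequality applies to `u + (ε - b)` on small balls around `x`. On the part of `B(x, r)` where
`u ≥ α` the shifted function is at least `α - b + ε`, hence the left-hand side is at least
`(α - b) δ^(1/σ)` whenever the density of `{u ≥ α}` in `B(x, r)` exceeds `δ`, while the
right-hand side is at most `c (u x + ε - b) = c ε`. Letting `ε → 0` contradicts `δ > 0`.
-/

open MeasureTheory Set

/-- The canonical map `EReal → ℝ≥0∞` (sending `⊤` to `⊤` and negative values to `0`). -/
noncomputable def erealToENNReal (x : EReal) : ENNReal :=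
  if x = ⊤ then ⊤ else ENNReal.ofReal x.toReal

open Filter Topology Metric
open scoped ENNReal

lemma erealToENNReal_coe (x : ℝ) : erealToENNReal x = ENNReal.ofReal x := by
  simp [erealToENNReal]

lemma erealToENNReal_mono : Monotone erealToENNReal := by
  intro a b h
  unfold erealToENNReal
  rcases eq_or_ne b ⊤ with rfl | hb
  · simp
  have ha : a ≠ ⊤ := ne_top_of_le_ne_top hb h
  rw [if_neg ha, if_neg hb]
  rcases eq_or_ne a ⊥ with rfl | ha'
  · simp
  · exact ENNReal.ofReal_le_ofReal (EReal.toReal_le_toReal h ha' hb)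

theorem LowerSemicontinuousOn.measurableSet_sep_le {X β : Type*} [TopologicalSpace X]
    [MeasurableSpace X] [OpensMeasurableSpace X] [TopologicalSpace β] [LinearOrder β]
    [OrderTopology β] [SecondCountableTopology β] [MeasurableSpace β] [BorelSpace β]
    {f : X → β} {s : Set X} (hf : LowerSemicontinuousOn f s) (hs : MeasurableSet s) (a : β) :
    MeasurableSet {y ∈ s | a ≤ f y} := by
  have hmeas : Measurable (s.domRestrict f) := (lowerSemicontinuous_restrict_iff.2 hf).measurable
  convert hs.subtype_image (hmeas (measurableSet_Ici (a := a))) using 1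
  ext y
  simp [and_comm]

theorem LowerSemicontinuousOn.exists_ball_subset_lt {X β : Type*} [PseudoMetricSpace X]
    [Preorder β] {f : X → β} {s : Set X} (hf : LowerSemicontinuousOn f s) (hs : IsOpen s)
    {x : X} (hx : x ∈ s) {y : β} (hy : y < f x) :
    ∃ R > 0, ball x R ⊆ s ∧ ∀ z ∈ ball x R, y < f z := by
  have h := hf x hx y hy
  rw [nhdsWithin_eq_nhds.2 (hs.mem_nhds hx)] at h
  obtain ⟨R, hR, hball⟩ := Metric.mem_nhds_iff.1 (inter_mem (hs.mem_nhds hx) h)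
  exact ⟨R, hR, fun z hz => (hball hz).1, fun z hz => (hball hz).2⟩

open ENNReal in
theorem mul_measure_div_rpow_le_average_rpow {X : Type*} [MeasurableSpace X] {μ : Measure X}
    {E B : Set X} (hE : MeasurableSet E) (hEB : E ⊆ B) {g : X → ℝ≥0∞} {t : ℝ≥0∞}
    (htg : ∀ z ∈ E, t ≤ g z) {p : ℝ} (hp : 0 < p) :
    t * (μ E / μ B) ^ (1 / p) ≤ ((∫⁻ z in B, g z ^ p ∂μ) / μ B) ^ (1 / p) := by
  have hint : t ^ p * μ E ≤ ∫⁻ z in B, g z ^ p ∂μ :=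
    calc t ^ p * μ E = ∫⁻ _ in E, t ^ p ∂μ := (setLIntegral_const E _).symm
      _ ≤ ∫⁻ z in E, g z ^ p ∂μ :=
        setLIntegral_mono' hE fun z hz => rpow_le_rpow (htg z hz) hp.le
      _ ≤ ∫⁻ z in B, g z ^ p ∂μ := lintegral_mono_set hEB
  calc t * (μ E / μ B) ^ (1 / p) = (t ^ p * μ E / μ B) ^ (1 / p) := by
        rw [mul_div_assoc, mul_rpow_of_nonneg _ _ (by positivity), ← rpow_mul,
          mul_one_div_cancel hp.ne', rpow_one]
    _ ≤ _ := by gcongr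

def WeakHarnack {X : Type*} [PseudoMetricSpace X] [MeasurableSpace X] (μ : Measure X)
    (Ω : Set X) (u : X → EReal) (σ c : ℝ) : Prop :=
  ∀ (y : X) (r : ℝ) (κ : ℝ), 0 < r → Metric.ball y (5 * r) ⊆ Ω →
    (∀ z ∈ Metric.ball y (5 * r), 0 < u z + (κ : EReal)) →
    ((∫⁻ z in Metric.ball y r, (erealToENNReal (u z + (κ : EReal))) ^ σ ∂μ) /
        μ (Metric.ball y r)) ^ (1 / σ) ≤
      ENNReal.ofReal c * erealToENNReal (⨅ z ∈ Metric.ball y (3 * r), (u z + (κ : EReal)))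

theorem WeakHarnack.ofReal_mul_density_rpow_le {X : Type*} [PseudoMetricSpace X]
    [MeasurableSpace X] [OpensMeasurableSpace X] {μ : Measure X} {Ω : Set X} {u : X → EReal}
    {σ c : ℝ} (hwh : WeakHarnack μ Ω u σ c) (hlsc : LowerSemicontinuousOn u Ω) (hσ : 0 < σ)
    {x : X} {b ε : ℝ} (hux : u x = b) {r : ℝ} (hr : 0 < r) (hΩ : ball x (5 * r) ⊆ Ω)
    (hlow : ∀ z ∈ ball x (5 * r), ((b - ε : ℝ) : EReal) < u z) (α : ℝ) :
    ENNReal.ofReal (α - b + ε) * (μ {y ∈ ball x r | (α : EReal) ≤ u y} / μ (ball x r)) ^ (1 / σ)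
      ≤ ENNReal.ofReal c * ENNReal.ofReal ε := by
  -- The shift `κ = ε - b` makes `u + κ` positive on `B(x, 5r)` while `u x + κ = ε`.
  have hpos : ∀ z ∈ ball x (5 * r), 0 < u z + ((ε - b : ℝ) : EReal) := fun z hz => by
    have h := EReal.add_lt_add_right_coe (hlow z hz) (ε - b)
    rwa [← EReal.coe_add, show b - ε + (ε - b) = 0 by ring, EReal.coe_zero] at h
  have hinf : ⨅ z ∈ ball x (3 * r), (u z + ((ε - b : ℝ) : EReal)) ≤ (ε : EReal) :=
    (iInf₂_le x (mem_ball_self (by positivity))).trans_eq (by rw [hux, ← EReal.coe_add]; ring_nf)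
  have hE : MeasurableSet {y ∈ ball x r | (α : EReal) ≤ u y} :=
    (hlsc.mono ((ball_subset_ball (by linarith)).trans hΩ)).measurableSet_sep_le
      measurableSet_ball _
  have hlevel : ∀ z ∈ {y ∈ ball x r | (α : EReal) ≤ u y},
      ENNReal.ofReal (α - b + ε) ≤ erealToENNReal (u z + ((ε - b : ℝ) : EReal)) := by
    rintro z ⟨-, hz⟩
    rw [← erealToENNReal_coe]
    refine erealToENNReal_mono ?_
    calc ((α - b + ε : ℝ) : EReal) = (α : EReal) + ((ε - b : ℝ) : EReal) := by
          rw [← EReal.coe_add]; ring_nf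
      _ ≤ u z + ((ε - b : ℝ) : EReal) := add_le_add_left hz _
  calc _ ≤ _ := mul_measure_div_rpow_le_average_rpow hE (sep_subset _ _) hlevel hσ
    _ ≤ _ := hwh x r (ε - b) hr hΩ hpos
    _ ≤ ENNReal.ofReal c * ENNReal.ofReal ε := by
      gcongr
      exact (erealToENNReal_mono hinf).trans_eq (erealToENNReal_coe ε)

theorem WeakHarnack.ofReal_mul_rpow_le_of_frequently {X : Type*} [PseudoMetricSpace X]
    [MeasurableSpace X] [OpensMeasurableSpace X] {μ : Measure X} {Ω : Set X} {u : X → EReal}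
    {σ c : ℝ} (hwh : WeakHarnack μ Ω u σ c) (hΩ : IsOpen Ω) (hlsc : LowerSemicontinuousOn u Ω)
    (hσ : 0 < σ) {x : X} (hx : x ∈ Ω) {b : ℝ} (hux : u x = b) {α : ℝ} {δ : ℝ≥0∞}
    (hfreq : ∃ᶠ r in 𝓝[>] 0, δ < μ {y ∈ ball x r | (α : EReal) ≤ u y} / μ (ball x r))
    {ε : ℝ} (hε : 0 < ε) :
    ENNReal.ofReal (α - b) * δ ^ (1 / σ) ≤ ENNReal.ofReal c * ENNReal.ofReal ε := by
  obtain ⟨R, hR, hRΩ, hRlow⟩ := hlsc.exists_ball_subset_lt hΩ hx (y := ((b - ε : ℝ) : EReal))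
    (by rw [hux]; exact_mod_cast sub_lt_self b hε)
  obtain ⟨r, hdens, hr, hrR⟩ :=
    (hfreq.and_eventually (Ioo_mem_nhdsGT (by positivity : (0 : ℝ) < R / 5))).exists
  have h5 : ball x (5 * r) ⊆ ball x R := ball_subset_ball (by linarith)
  calc ENNReal.ofReal (α - b) * δ ^ (1 / σ)
      ≤ ENNReal.ofReal (α - b + ε) *
          (μ {y ∈ ball x r | (α : EReal) ≤ u y} / μ (ball x r)) ^ (1 / σ) := by
        gcongr
        linarith
    _ ≤ _ := hwh.ofReal_mul_density_rpow_le hlsc hσ hux hr (h5.trans hRΩ)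
        (fun z hz => hRlow z (h5 hz)) α

theorem ge_of_density_of_weak_harnack_general
    (n : ℕ) (μ : Measure (EuclideanSpace ℝ (Fin n)))
    (Ω : Set (EuclideanSpace ℝ (Fin n))) (hΩ : IsOpen Ω)
    (u : EuclideanSpace ℝ (Fin n) → EReal)
    (hlsc : LowerSemicontinuousOn u Ω) (hnb : ∀ z ∈ Ω, u z ≠ ⊥)
    (σ c : ℝ) (hσ : 0 < σ)
    (hwh : ∀ (y : EuclideanSpace ℝ (Fin n)) (r : ℝ) (κ : ℝ), 0 < r →
      Metric.ball y (5 * r) ⊆ Ω →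
      (∀ z ∈ Metric.ball y (5 * r), 0 < u z + (κ : EReal)) →
      ((∫⁻ z in Metric.ball y r, (erealToENNReal (u z + (κ : EReal))) ^ σ ∂μ) /
          μ (Metric.ball y r)) ^ (1 / σ) ≤
        ENNReal.ofReal c *
          erealToENNReal (⨅ z ∈ Metric.ball y (3 * r), (u z + (κ : EReal))))
    (x : EuclideanSpace ℝ (Fin n)) (hx : x ∈ Ω) (α : ℝ)
    (hdens : 0 < Filter.limsup
      (fun r : ℝ => μ {y ∈ Metric.ball x r | (α : EReal) ≤ u y} / μ (Metric.ball x r))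
      (nhdsWithin 0 (Set.Ioi 0))) :
    (α : EReal) ≤ u x := by
  by_contra! hlt
  obtain ⟨b, hb⟩ : ∃ b : ℝ, u x = b := ⟨_, (EReal.coe_toReal hlt.ne_top (hnb x hx)).symm⟩
  have hba : b < α := by exact_mod_cast hb ▸ hlt
  obtain ⟨δ, hδ, hδlt⟩ := exists_between hdens
  have hbound : ∀ ε > 0,
      ENNReal.ofReal (α - b) * δ ^ (1 / σ) ≤ ENNReal.ofReal c * ENNReal.ofReal ε :=
    fun ε hε => WeakHarnack.ofReal_mul_rpow_le_of_frequently hwh hΩ hlsc hσ hx hb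
      (frequently_lt_of_lt_limsup (h := hδlt)) hε
  have hK : 0 < ENNReal.ofReal (α - b) * δ ^ (1 / σ) :=
    ENNReal.mul_pos (by simpa using hba) (ENNReal.rpow_pos hδ hδlt.ne_top).ne'
  have hlim : Tendsto (fun ε => ENNReal.ofReal c * ENNReal.ofReal ε) (𝓝 0) (𝓝 0) :=
    ((ENNReal.continuous_const_mul ENNReal.ofReal_ne_top).comp ENNReal.continuous_ofReal).tendsto'
      0 0 (by simp)
  exact hK.not_ge (ge_of_tendsto (hlim.mono_left nhdsWithin_le_nhds)
    ((eventually_mem_nhdsWithin (s := Ioi 0)).mono hbound))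

/-- **Density point lemma for functions with a weak Harnack property.**
Let `μ` be a Borel measure on `ℝⁿ`, positive and finite on open balls, `Ω ⊆ ℝⁿ` open
and `u : Ω → (-∞,∞]` lower semicontinuous, satisfying the weak Harnack inequality:
for all balls `B(y,r)` with `B(y,5r) ⊆ Ω` and all `κ ∈ ℝ` with `u + κ > 0` on
`B(y,5r)`,
`((1/μ(B(y,r))) ∫_{B(y,r)} (u+κ)^σ dμ)^{1/σ} ≤ c · inf_{B(y,3r)} (u+κ)`.
If `x ∈ Ω`, `α ∈ ℝ` and `limsup_{r→0} μ({y ∈ B(x,r) : u(y) ≥ α})/μ(B(x,r)) > 0`,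
then `u(x) ≥ α`. -/
theorem ge_of_density_of_weak_harnack
    (n : ℕ) (μ : Measure (EuclideanSpace ℝ (Fin n)))
    (hμ : ∀ (y : EuclideanSpace ℝ (Fin n)) (r : ℝ), 0 < r →
      0 < μ (Metric.ball y r) ∧ μ (Metric.ball y r) < ⊤)
    (Ω : Set (EuclideanSpace ℝ (Fin n))) (hΩ : IsOpen Ω)
    (u : EuclideanSpace ℝ (Fin n) → EReal)
    (hlsc : LowerSemicontinuousOn u Ω) (hnb : ∀ z ∈ Ω, u z ≠ ⊥)
    (σ c : ℝ) (hσ : 0 < σ) (hc : 0 < c)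
    (hwh : ∀ (y : EuclideanSpace ℝ (Fin n)) (r : ℝ) (κ : ℝ), 0 < r →
      Metric.ball y (5 * r) ⊆ Ω →
      (∀ z ∈ Metric.ball y (5 * r), 0 < u z + (κ : EReal)) →
      ((∫⁻ z in Metric.ball y r, (erealToENNReal (u z + (κ : EReal))) ^ σ ∂μ) /
          μ (Metric.ball y r)) ^ (1 / σ) ≤
        ENNReal.ofReal c *
          erealToENNReal (⨅ z ∈ Metric.ball y (3 * r), (u z + (κ : EReal))))
    (x : EuclideanSpace ℝ (Fin n)) (hx : x ∈ Ω) (α : ℝ)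
    (hdens : 0 < Filter.limsup
      (fun r : ℝ => μ {y ∈ Metric.ball x r | (α : EReal) ≤ u y} / μ (Metric.ball x r))
      (nhdsWithin 0 (Set.Ioi 0))) :
    (α : EReal) ≤ u x :=
  ge_of_density_of_weak_harnack_general n μ Ω hΩ u hlsc hnb σ c hσ hwh x hx α hdens
end

section
/- Let q > 1, K ≥ 1, and let v be an A_q weight on ℝ with constant K; set ν(S) = ∫_S v dx for measurable S ⊆ ℝ. Let Ω ⊆ ℝ be a nonempty open set and E ⊊ Ω a relatively closed subset such that no connected component of Ω is contained in E, and assume that I \ E is connected for every connected component I of Ω. Then the following are equivalent: (i) there exists C > 0 such that |I| ≤ C |I \ E| for every connected component I of Ω, where |·| denotes Lebesgue measure; (ii) there exists C' > 0 such that ν(I) ≤ C' ν(I \ E) for every connected component I of Ω. (In the application, q = p/(p-1) and v = w̃^{1/(1-p)} for an A_p weight w̃.) -/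
open MeasureTheory Set

theorem Set.OrdConnected.min_volume_le_volume_inter_ball {J : Set ℝ} (hJ : J.OrdConnected)
    {x : ℝ} (hx : x ∈ J) (r : ℝ) :
    min (volume J) (ENNReal.ofReal r) ≤ volume (J ∩ Metric.ball x r) := by
  by_cases hJB : J ⊆ Metric.ball x r
  · rw [inter_eq_left.2 hJB]
    exact min_le_left _ _
  obtain ⟨y, hyJ, hyB⟩ := not_subset.1 hJB
  rw [Real.ball_eq_Ioo] at hyB ⊢
  refine (min_le_right _ _).trans ?_
  rcases not_and_or.1 hyB with hy | hy <;> rw [not_lt] at hy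
  · calc ENNReal.ofReal r = volume (Ioo (x - r) x) := by simp
      _ ≤ volume (J ∩ Ioo (x - r) (x + r)) := measure_mono fun z hz =>
          ⟨hJ.out hyJ hx ⟨by linarith [hz.1], hz.2.le⟩, hz.1, by linarith [hz.1, hz.2]⟩
  · calc ENNReal.ofReal r = volume (Ioo x (x + r)) := by simp
      _ ≤ volume (J ∩ Ioo (x - r) (x + r)) := measure_mono fun z hz =>
          ⟨hJ.out hx hyJ ⟨hz.1.le, by linarith [hz.2]⟩, by linarith [hz.1, hz.2], hz.2⟩

theorem volume_inter_ball_le_mul_volume_inter_ball {I J : Set ℝ} (hJ : J.OrdConnected) {x : ℝ}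
    (hx : x ∈ J) {C : ℝ} (h : volume I ≤ ENNReal.ofReal C * volume J) (r : ℝ) :
    volume (I ∩ Metric.ball x r) ≤ ENNReal.ofReal (max C 2) * volume (J ∩ Metric.ball x r) :=
  calc volume (I ∩ Metric.ball x r)
      ≤ min (ENNReal.ofReal C * volume J) (ENNReal.ofReal 2 * ENNReal.ofReal r) := by
        refine le_min ((measure_mono inter_subset_left).trans h) ?_
        rw [← ENNReal.ofReal_mul zero_le_two, ← Real.volume_ball x]
        exact measure_mono inter_subset_right
    _ ≤ ENNReal.ofReal (max C 2) * min (volume J) (ENNReal.ofReal r) := by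
        rw [mul_min]
        gcongr <;> simp
    _ ≤ ENNReal.ofReal (max C 2) * volume (J ∩ Metric.ball x r) := by
        gcongr
        exact hJ.min_volume_le_volume_inter_ball hx r

theorem Set.OrdConnected.volume_eq_top_of_not_bddAbove {s : Set ℝ} (hs : s.OrdConnected)
    (h : ¬BddAbove s) : volume s = ⊤ := by
  obtain ⟨x, hx⟩ := nonempty_of_not_bddAbove h
  refine top_le_iff.1 (Real.volume_Ici (a := x) ▸ measure_mono fun y hy => ?_)
  obtain ⟨z, hz, hyz⟩ := not_bddAbove_iff.1 h y
  exact hs.out hx hz ⟨hy, hyz.le⟩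

theorem Set.OrdConnected.volume_eq_top_of_not_bddBelow {s : Set ℝ} (hs : s.OrdConnected)
    (h : ¬BddBelow s) : volume s = ⊤ := by
  obtain ⟨x, hx⟩ := nonempty_of_not_bddBelow h
  refine top_le_iff.1 (Real.volume_Iic (a := x) ▸ measure_mono fun y hy => ?_)
  obtain ⟨z, hz, hzy⟩ := not_bddBelow_iff.1 h y
  exact hs.out hz hx ⟨hzy.le, hy⟩

theorem Set.OrdConnected.Ioo_min_max_subset {s : Set ℝ} (hs : s.OrdConnected) {y c d : ℝ}
    (hy : y ∈ s) (hcd : Ioo c d ⊆ s) (hlt : c < d) : Ioo (min y c) (max y d) ⊆ s := by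
  rintro z ⟨hz₁, hz₂⟩
  obtain ⟨t, ht⟩ := exists_between hlt
  rcases le_or_gt z c with hzc | hcz
  · have hyz : y < z := (min_lt_iff.1 hz₁).resolve_right hzc.not_gt
    exact hs.uIcc_subset hy (hcd ht) (mem_uIcc.2 (Or.inl ⟨hyz.le, hzc.trans ht.1.le⟩))
  rcases lt_or_ge z d with hzd | hdz
  · exact hcd ⟨hcz, hzd⟩
  · have hzy : z < y := (lt_max_iff.1 hz₂).resolve_right hdz.not_gt
    exact hs.uIcc_subset hy (hcd ht) (mem_uIcc.2 (Or.inr ⟨ht.2.le.trans hdz, hzy.le⟩))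

noncomputable def weightMeasure (v : ℝ → ℝ) : Measure ℝ :=
  volume.withDensity fun t => ENNReal.ofReal (v t)

section weightMeasure

variable {u : ℝ → ℝ}

theorem weightMeasure_apply (u : ℝ → ℝ) (s : Set ℝ) :
    weightMeasure u s = ∫⁻ t in s, ENNReal.ofReal (u t) :=
  withDensity_apply' _ _

theorem weightMeasure_absolutelyContinuous (u : ℝ → ℝ) : weightMeasure u ≪ volume :=
  withDensity_absolutelyContinuous _ _

theorem absolutelyContinuous_weightMeasure (hu : Measurable u) (hpos : ∀ x, 0 < u x) :
    volume ≪ weightMeasure u :=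
  withDensity_absolutelyContinuous' hu.ennreal_ofReal.aemeasurable
    (Filter.Eventually.of_forall fun x => (ENNReal.ofReal_pos.2 (hpos x)).ne')

theorem weightMeasure_Ioo_ne_zero (hu : Measurable u) (hpos : ∀ x, 0 < u x) {a b : ℝ}
    (hab : a < b) : weightMeasure u (Ioo a b) ≠ 0 :=
  fun h => (by simpa using hab : volume (Ioo a b) ≠ 0)
    (absolutelyContinuous_weightMeasure hu hpos h)

theorem weightMeasure_Icc (u : ℝ → ℝ) (a b : ℝ) :
    weightMeasure u (Icc a b) = weightMeasure u (Ioo a b) :=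
  measure_congr ((weightMeasure_absolutelyContinuous u).ae_eq Ioo_ae_eq_Icc).symm

/-- Hölder's inequality for `1 = u ^ (1/q) · (u ^ (1/(1-q))) ^ ((q-1)/q)`. -/
theorem volume_rpow_le_weightMeasure_mul {q : ℝ} (hq : 1 < q) (hu : Measurable u)
    (hpos : ∀ x, 0 < u x) (S : Set ℝ) :
    volume S ^ q ≤ weightMeasure u S * weightMeasure (u · ^ (1 / (1 - q))) S ^ (q - 1) := by
  have hq0 : 0 < q := by linarith
  have hone : ∀ x, ENNReal.ofReal (u x) ^ (1 / q) *
      ENNReal.ofReal (u x ^ (1 / (1 - q))) ^ ((q - 1) / q) = 1 := fun x => by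
    rw [ENNReal.ofReal_rpow_of_pos (hpos x),
      ENNReal.ofReal_rpow_of_pos (Real.rpow_pos_of_pos (hpos x) _), ← ENNReal.ofReal_mul
        (Real.rpow_nonneg (hpos x).le _), ← Real.rpow_mul (hpos x).le,
      ← Real.rpow_add (hpos x)]
    have hexp : 1 / q + 1 / (1 - q) * ((q - 1) / q) = 0 := by
      have : 1 - q ≠ 0 := by linarith
      field_simp
      ring
    rw [hexp, Real.rpow_zero, ENNReal.ofReal_one]
  have holder := ENNReal.lintegral_mul_norm_pow_le (μ := volume.restrict S)
    (p := 1 / q) (q := (q - 1) / q)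
    hu.ennreal_ofReal.aemeasurable ((hu.pow_const (1 / (1 - q))).ennreal_ofReal.aemeasurable)
    (one_div_nonneg.2 hq0.le) (div_nonneg (sub_nonneg.2 hq.le) hq0.le)
    (by rw [← add_div, add_sub_cancel, div_self hq0.ne'])
  simp only [hone, lintegral_const, Measure.restrict_apply_univ, one_mul] at holder
  calc volume S ^ q
      ≤ (weightMeasure u S ^ (1 / q) *
          weightMeasure (u · ^ (1 / (1 - q))) S ^ ((q - 1) / q)) ^ q :=
        ENNReal.rpow_le_rpow (by simpa only [weightMeasure_apply] using holder) hq0.le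
    _ = weightMeasure u S * weightMeasure (u · ^ (1 / (1 - q))) S ^ (q - 1) := by
        rw [ENNReal.mul_rpow_of_nonneg _ _ hq0.le, ← ENNReal.rpow_mul, ← ENNReal.rpow_mul,
          one_div_mul_cancel hq0.ne', div_mul_cancel₀ _ hq0.ne', ENNReal.rpow_one]

end weightMeasure

/-- A subset with at least a quarter of the length of an interval carries at least the share
`(K * 4 ^ q)⁻¹` of its weight, and a subinterval of at most half the length misses such a set. -/
noncomputable def aqDecayRatio (q K : ℝ) : ℝ := 1 - (K * 4 ^ q)⁻¹

theorem aqDecayRatio_nonneg {q K : ℝ} (hq : 0 ≤ q) (hK : 1 ≤ K) : 0 ≤ aqDecayRatio q K :=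
  sub_nonneg.2 (inv_le_one_of_one_le₀ (one_le_mul_of_one_le_of_one_le hK
    (Real.one_le_rpow (by norm_num) hq)))

theorem aqDecayRatio_lt_one {q K : ℝ} (hK : 0 < K) : aqDecayRatio q K < 1 :=
  sub_lt_self _ (inv_pos.2 (mul_pos hK (Real.rpow_pos_of_pos (by norm_num) q)))

namespace IsAqWeight

variable {q K : ℝ} {v : ℝ → ℝ} {a b : ℝ}

theorem weightMeasure_Ioo_ne_zero (hv : IsAqWeight q K v) (hab : a < b) :
    weightMeasure v (Ioo a b) ≠ 0 :=
  _root_.weightMeasure_Ioo_ne_zero hv.1 hv.2.1 hab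

theorem weightMeasure_dual_Ioo_ne_zero (hv : IsAqWeight q K v) (hab : a < b) :
    weightMeasure (v · ^ (1 / (1 - q))) (Ioo a b) ≠ 0 :=
  _root_.weightMeasure_Ioo_ne_zero (hv.1.pow_const _)
    (fun x => Real.rpow_pos_of_pos (hv.2.1 x) _) hab

theorem weightMeasure_mul_rpow_le (hv : IsAqWeight q K v) (hq : 1 ≤ q) (hab : a < b) :
    weightMeasure v (Ioo a b) * weightMeasure (v · ^ (1 / (1 - q))) (Ioo a b) ^ (q - 1) ≤
      ENNReal.ofReal K * ENNReal.ofReal (b - a) ^ q := by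
  set L := ENNReal.ofReal (b - a)
  have hL0 : L ≠ 0 := by simpa [L] using hab
  have hLtop : L ≠ ⊤ := ENNReal.ofReal_ne_top
  have hAq := hv.2.2 a b hab
  simp only [← weightMeasure_apply] at hAq
  calc weightMeasure v (Ioo a b) * weightMeasure (v · ^ (1 / (1 - q))) (Ioo a b) ^ (q - 1)
      = (weightMeasure v (Ioo a b) / L * L) *
          (weightMeasure (v · ^ (1 / (1 - q))) (Ioo a b) / L * L) ^ (q - 1) := by
        rw [ENNReal.div_mul_cancel hL0 hLtop, ENNReal.div_mul_cancel hL0 hLtop]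
    _ = (weightMeasure v (Ioo a b) / L *
          (weightMeasure (v · ^ (1 / (1 - q))) (Ioo a b) / L) ^ (q - 1)) * L ^ (1 + (q - 1)) := by
        rw [ENNReal.mul_rpow_of_nonneg _ _ (sub_nonneg.2 hq), ENNReal.rpow_add _ _ hL0 hLtop,
          ENNReal.rpow_one]
        ring
    _ ≤ ENNReal.ofReal K * L ^ q := by
        rw [add_sub_cancel]
        gcongr

theorem weightMeasure_mul_rpow_ne_top (hv : IsAqWeight q K v) (hq : 1 ≤ q) (hab : a < b) :
    weightMeasure v (Ioo a b) * weightMeasure (v · ^ (1 / (1 - q))) (Ioo a b) ^ (q - 1) ≠ ⊤ :=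
  ne_top_of_le_ne_top (ENNReal.mul_ne_top ENNReal.ofReal_ne_top
    (ENNReal.rpow_ne_top_of_nonneg (by linarith) ENNReal.ofReal_ne_top))
    (hv.weightMeasure_mul_rpow_le hq hab)

theorem weightMeasure_Ioo_ne_top (hv : IsAqWeight q K v) (hq : 1 < q) (hab : a < b) :
    weightMeasure v (Ioo a b) ≠ ⊤ := by
  intro htop
  have hfin := hv.weightMeasure_mul_rpow_ne_top hq.le hab
  rw [htop, ENNReal.top_mul ((ENNReal.rpow_eq_zero_iff_of_pos (sub_pos.2 hq)).not.2
    (hv.weightMeasure_dual_Ioo_ne_zero hab))] at hfin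
  exact hfin rfl

theorem weightMeasure_dual_Ioo_ne_top (hv : IsAqWeight q K v) (hq : 1 < q) (hab : a < b) :
    weightMeasure (v · ^ (1 / (1 - q))) (Ioo a b) ≠ ⊤ := by
  intro htop
  have hfin := hv.weightMeasure_mul_rpow_ne_top hq.le hab
  rw [htop, ENNReal.top_rpow_of_pos (sub_pos.2 hq),
    ENNReal.mul_top (hv.weightMeasure_Ioo_ne_zero hab)] at hfin
  exact hfin rfl

theorem weightMeasure_Ioo_le (hv : IsAqWeight q K v) (hq : 1 < q) (hK : 0 ≤ K) (hab : a < b)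
    {S : Set ℝ} (hS : S ⊆ Icc a b) {M : ℝ} (hM : 0 ≤ M)
    (hvol : ENNReal.ofReal (b - a) ≤ ENNReal.ofReal M * volume S) :
    weightMeasure v (Ioo a b) ≤ ENNReal.ofReal (K * M ^ q) * weightMeasure v S := by
  set σ := weightMeasure (v · ^ (1 / (1 - q)))
  have hσ0 : σ (Ioo a b) ^ (q - 1) ≠ 0 :=
    (ENNReal.rpow_eq_zero_iff_of_pos (sub_pos.2 hq)).not.2 (hv.weightMeasure_dual_Ioo_ne_zero hab)
  have hσtop : σ (Ioo a b) ^ (q - 1) ≠ ⊤ :=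
    ENNReal.rpow_ne_top_of_nonneg (sub_nonneg.2 hq.le) (hv.weightMeasure_dual_Ioo_ne_top hq hab)
  refine (ENNReal.mul_le_mul_iff_left hσ0 hσtop).1 ?_
  calc weightMeasure v (Ioo a b) * σ (Ioo a b) ^ (q - 1)
      ≤ ENNReal.ofReal K * ENNReal.ofReal (b - a) ^ q := hv.weightMeasure_mul_rpow_le hq.le hab
    _ ≤ ENNReal.ofReal K * (ENNReal.ofReal M * volume S) ^ q := by gcongr
    _ = ENNReal.ofReal (K * M ^ q) * volume S ^ q := by
        rw [ENNReal.mul_rpow_of_nonneg _ _ (by linarith), ENNReal.ofReal_rpow_of_nonneg hM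
          (by linarith), ENNReal.ofReal_mul hK, mul_assoc]
    _ ≤ ENNReal.ofReal (K * M ^ q) * (weightMeasure v S * σ S ^ (q - 1)) := by
        gcongr
        exact volume_rpow_le_weightMeasure_mul hq hv.1 hv.2.1 S
    _ ≤ ENNReal.ofReal (K * M ^ q) * weightMeasure v S * σ (Ioo a b) ^ (q - 1) := by
        have hσS : σ S ≤ σ (Ioo a b) := (measure_mono hS).trans_eq (weightMeasure_Icc _ _ _)
        rw [mul_assoc]
        gcongr

theorem weightMeasure_le_of_volume_le_of_bdd (hv : IsAqWeight q K v) (hq : 1 < q) (hK : 0 ≤ K)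
    {S T : Set ℝ} (hT : T.OrdConnected) (hTa : BddAbove T) (hTb : BddBelow T) (hST : S ⊆ T)
    {M : ℝ} (hM : 0 ≤ M) (hvol : volume T ≤ ENNReal.ofReal M * volume S) :
    weightMeasure v T ≤ ENNReal.ofReal (K * M ^ q) * weightMeasure v S := by
  have hT_Icc := subset_Icc_csInf_csSup hTb hTa
  rcases le_or_gt (sSup T) (sInf T) with hle | hlt
  · have hT0 : volume T = 0 := measure_mono_null hT_Icc (by simp [hle])
    simp [weightMeasure_absolutelyContinuous v hT0]
  have hTne : T.Nonempty := by
    rw [nonempty_iff_ne_empty]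
    rintro rfl
    simp at hlt
  have hIoo_T : Ioo (sInf T) (sSup T) ⊆ T :=
    IsConnected.Ioo_csInf_csSup_subset ⟨hTne, hT.isPreconnected⟩ hTb hTa
  calc weightMeasure v T ≤ weightMeasure v (Icc (sInf T) (sSup T)) := measure_mono hT_Icc
    _ = weightMeasure v (Ioo (sInf T) (sSup T)) := weightMeasure_Icc v _ _
    _ ≤ ENNReal.ofReal (K * M ^ q) * weightMeasure v S :=
        hv.weightMeasure_Ioo_le hq hK hlt (hST.trans hT_Icc) hM
          (by rw [← Real.volume_Ioo]; exact (measure_mono hIoo_T).trans hvol)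

theorem weightMeasure_le_of_volume_le (hv : IsAqWeight q K v) (hq : 1 < q) (hK : 0 ≤ K)
    {I J : Set ℝ} (hI : I.OrdConnected) (hJ : J.OrdConnected) (hJI : J ⊆ I) {C : ℝ}
    (h : volume I ≤ ENNReal.ofReal C * volume J) :
    weightMeasure v I ≤ ENNReal.ofReal (K * max C 2 ^ q) * weightMeasure v J := by
  rcases J.eq_empty_or_nonempty with rfl | ⟨x, hx⟩
  · simp only [measure_empty, mul_zero, nonpos_iff_eq_zero] at h
    simp [weightMeasure_absolutelyContinuous v h]
  have htrunc : ∀ n : ℕ, weightMeasure v (I ∩ Metric.ball x n) ≤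
      ENNReal.ofReal (K * max C 2 ^ q) * weightMeasure v J := fun n => by
    have hbdd : Bornology.IsBounded (I ∩ Metric.ball x n) :=
      Metric.isBounded_ball.subset inter_subset_right
    calc weightMeasure v (I ∩ Metric.ball x n)
        ≤ ENNReal.ofReal (K * max C 2 ^ q) * weightMeasure v (J ∩ Metric.ball x n) :=
          hv.weightMeasure_le_of_volume_le_of_bdd hq hK
            (hI.inter (by rw [Real.ball_eq_Ioo]; exact ordConnected_Ioo)) hbdd.bddAbove
            hbdd.bddBelow (inter_subset_inter_left _ hJI) (by positivity)
            (volume_inter_ball_le_mul_volume_inter_ball hJ hx h n)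
      _ ≤ ENNReal.ofReal (K * max C 2 ^ q) * weightMeasure v J := by
          gcongr
          exact inter_subset_left
  calc weightMeasure v I = ⨆ n : ℕ, weightMeasure v (I ∩ Metric.ball x n) := by
        rw [← Monotone.measure_iUnion, ← inter_iUnion, Metric.iUnion_ball_nat, inter_univ]
        exact fun m n hmn => inter_subset_inter_right _
          (Metric.ball_subset_ball (by exact_mod_cast hmn))
    _ ≤ ENNReal.ofReal (K * max C 2 ^ q) * weightMeasure v J := iSup_le htrunc

theorem weightMeasure_Ioo_le_aqDecayRatio_mul (hv : IsAqWeight q K v) (hq : 1 < q)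
    (hK : 1 ≤ K) {c d : ℝ} (hac : a ≤ c) (hcd : c < d) (hdb : d ≤ b)
    (hlen : 2 * (d - c) ≤ b - a) :
    weightMeasure v (Ioo c d) ≤
      ENNReal.ofReal (aqDecayRatio q K) * weightMeasure v (Ioo a b) := by
  have hab : a < b := by linarith
  obtain ⟨S, hS_sub, hS_disj, hS_len⟩ : ∃ S, S ⊆ Ioo a b ∧ Disjoint (Ioo c d) S ∧
      ENNReal.ofReal (b - a) ≤ ENNReal.ofReal 4 * volume S := by
    rcases le_total (c - a) (b - d) with h | h
    · refine ⟨Ioo d b, Ioo_subset_Ioo_left (by linarith),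
        disjoint_left.2 fun z h₁ h₂ => lt_asymm h₁.2 h₂.1, ?_⟩
      rw [Real.volume_Ioo, ← ENNReal.ofReal_mul (by norm_num)]
      exact ENNReal.ofReal_le_ofReal (by linarith)
    · refine ⟨Ioo a c, Ioo_subset_Ioo_right (by linarith),
        disjoint_left.2 fun z h₁ h₂ => lt_asymm h₁.1 h₂.2, ?_⟩
      rw [Real.volume_Ioo, ← ENNReal.ofReal_mul (by norm_num)]
      exact ENNReal.ofReal_le_ofReal (by linarith)
  set W := weightMeasure v (Ioo a b)
  have hWtop : W ≠ ⊤ := hv.weightMeasure_Ioo_ne_top hq hab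
  have hA : 0 < K * 4 ^ q := mul_pos (by linarith) (Real.rpow_pos_of_pos (by norm_num) q)
  have hW_le : W ≤ ENNReal.ofReal (K * 4 ^ q) * weightMeasure v S :=
    hv.weightMeasure_Ioo_le hq (by linarith) hab (hS_sub.trans Ioo_subset_Icc_self)
      (by norm_num) hS_len
  have hS_ge : ENNReal.ofReal (K * 4 ^ q)⁻¹ * W ≤ weightMeasure v S := by
    rw [ENNReal.ofReal_inv_of_pos hA]
    exact (ENNReal.inv_mul_le_iff (by simpa using hA) ENNReal.ofReal_ne_top).2 hW_le
  have hsum : weightMeasure v (Ioo c d) + weightMeasure v S ≤ W := by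
    rw [← measure_union' hS_disj measurableSet_Ioo]
    exact measure_mono (union_subset (Ioo_subset_Ioo hac hdb) hS_sub)
  calc weightMeasure v (Ioo c d) ≤ W - weightMeasure v S :=
        ENNReal.le_sub_of_add_le_right (ne_top_of_le_ne_top hWtop (measure_mono hS_sub)) hsum
    _ ≤ W - ENNReal.ofReal (K * 4 ^ q)⁻¹ * W := tsub_le_tsub_left hS_ge _
    _ = ENNReal.ofReal (aqDecayRatio q K) * W := by
        rw [aqDecayRatio, ENNReal.ofReal_sub _ (inv_nonneg.2 hA.le), ENNReal.ofReal_one,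
          ENNReal.sub_mul fun _ _ => hWtop, one_mul]

theorem weightMeasure_Ioo_le_aqDecayRatio_pow_mul (hv : IsAqWeight q K v) (hq : 1 < q)
    (hK : 1 ≤ K) (n : ℕ) {c d : ℝ} (hac : a ≤ c) (hcd : c < d) (hdb : d ≤ b)
    (hlen : 2 ^ n * (d - c) ≤ b - a) :
    weightMeasure v (Ioo c d) ≤
      ENNReal.ofReal (aqDecayRatio q K ^ n) * weightMeasure v (Ioo a b) := by
  induction n generalizing c d with
  | zero => simpa using measure_mono (Ioo_subset_Ioo hac hdb)
  | succ n ih =>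
    have h2n : (2 : ℝ) ≤ 2 ^ (n + 1) := le_self_pow₀ one_le_two n.succ_ne_zero
    have hlen₂ : 2 * (d - c) ≤ b - a := by nlinarith
    -- double `(c, d)` to an interval of length `2 (d - c)` inside `(a, b)`
    set c' := max a (2 * c - d)
    have hc'c : c' ≤ c := max_le hac (by linarith)
    have hc'b : c' ≤ b - 2 * (d - c) := max_le (by linarith) (by linarith)
    calc weightMeasure v (Ioo c d)
        ≤ ENNReal.ofReal (aqDecayRatio q K) * weightMeasure v (Ioo c' (c' + 2 * (d - c))) :=
          hv.weightMeasure_Ioo_le_aqDecayRatio_mul hq hK hc'c hcd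
            (by linarith [le_max_right a (2 * c - d)]) (by linarith)
      _ ≤ ENNReal.ofReal (aqDecayRatio q K) *
            (ENNReal.ofReal (aqDecayRatio q K ^ n) * weightMeasure v (Ioo a b)) := by
          gcongr
          rw [pow_succ] at hlen
          exact ih (le_max_left _ _) (by linarith) (by linarith) (by linarith)
      _ = ENNReal.ofReal (aqDecayRatio q K ^ (n + 1)) * weightMeasure v (Ioo a b) := by
          rw [← mul_assoc, ← ENNReal.ofReal_mul (aqDecayRatio_nonneg (by linarith) hK),
            pow_succ']

theorem sub_lt_of_weightMeasure_le (hv : IsAqWeight q K v) (hq : 1 < q) (hK : 1 ≤ K)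
    {I J : Set ℝ} {c d C' : ℝ} {n : ℕ} (hcd : c < d) (hJ : J ⊆ Icc c d)
    (hn : aqDecayRatio q K ^ n * C' < 1)
    (h : weightMeasure v I ≤ ENNReal.ofReal C' * weightMeasure v J)
    (hI : Ioo a b ⊆ I) (hac : a ≤ c) (hdb : d ≤ b) : b - a < 2 ^ n * (d - c) := by
  by_contra! hlong
  set W := weightMeasure v (Ioo c d)
  have hJW : weightMeasure v J ≤ W := (measure_mono hJ).trans_eq (weightMeasure_Icc v c d)
  refine lt_irrefl W ?_
  calc W ≤ ENNReal.ofReal (aqDecayRatio q K ^ n) * weightMeasure v (Ioo a b) :=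
        hv.weightMeasure_Ioo_le_aqDecayRatio_pow_mul hq hK n hac hcd hdb hlong
    _ ≤ ENNReal.ofReal (aqDecayRatio q K ^ n) * (ENNReal.ofReal C' * W) := by
        gcongr
        exact (measure_mono hI).trans (h.trans (by gcongr))
    _ = ENNReal.ofReal (aqDecayRatio q K ^ n * C') * W := by
        rw [ENNReal.ofReal_mul (pow_nonneg (aqDecayRatio_nonneg (by linarith) hK) n), mul_assoc]
    _ < 1 * W := (ENNReal.mul_lt_mul_iff_left (hv.weightMeasure_Ioo_ne_zero hcd)
        (hv.weightMeasure_Ioo_ne_top hq hcd)).2 (ENNReal.ofReal_lt_one.2 hn)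
    _ = W := one_mul W

theorem volume_le_of_weightMeasure_le (hv : IsAqWeight q K v) (hq : 1 < q) (hK : 1 ≤ K)
    {I J : Set ℝ} (hI : I.OrdConnected) (hJ : J.OrdConnected) (hJI : J ⊆ I) {C' : ℝ} {n : ℕ}
    (hn : aqDecayRatio q K ^ n * C' < 1)
    (h : weightMeasure v I ≤ ENNReal.ofReal C' * weightMeasure v J) :
    volume I ≤ ENNReal.ofReal (2 ^ (n + 1)) * volume J := by
  by_cases hJa : BddAbove J; swap
  · simp [hJ.volume_eq_top_of_not_bddAbove hJa]
  by_cases hJb : BddBelow J; swap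
  · simp [hJ.volume_eq_top_of_not_bddBelow hJb]
  set c := sInf J
  set d := sSup J
  have hJ_Icc : J ⊆ Icc c d := subset_Icc_csInf_csSup hJb hJa
  rcases le_or_gt d c with hdc | hcd
  · have hJ0 : volume J = 0 := measure_mono_null hJ_Icc (by simp [hdc])
    have hI0 : weightMeasure v I = 0 := by
      simpa [weightMeasure_absolutelyContinuous v hJ0] using h
    simp [absolutelyContinuous_weightMeasure hv.1 hv.2.1 hI0]
  have hJne : J.Nonempty := by
    rw [nonempty_iff_ne_empty]
    rintro hJ_empty
    simp [c, d, hJ_empty] at hcd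
  have hIoo_J : Ioo c d ⊆ J :=
    IsConnected.Ioo_csInf_csSup_subset ⟨hJne, hJ.isPreconnected⟩ hJb hJa
  set L := 2 ^ n * (d - c)
  have hI_Icc : I ⊆ Icc (d - L) (c + L) := fun y hy => by
    have hlt := hv.sub_lt_of_weightMeasure_le hq hK hcd hJ_Icc hn h
      (hI.Ioo_min_max_subset hy (hIoo_J.trans hJI) hcd) (min_le_right _ _) (le_max_right _ _)
    constructor <;> linarith [min_le_left y c, le_max_left y d, min_le_right y c, le_max_right y d]
  calc volume I ≤ volume (Icc (d - L) (c + L)) := measure_mono hI_Icc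
    _ = ENNReal.ofReal (c + L - (d - L)) := Real.volume_Icc
    _ ≤ ENNReal.ofReal (2 ^ (n + 1) * (d - c)) :=
        ENNReal.ofReal_le_ofReal (by rw [pow_succ]; linarith)
    _ = ENNReal.ofReal (2 ^ (n + 1)) * volume (Ioo c d) := by
        rw [ENNReal.ofReal_mul (by positivity), Real.volume_Ioo]
    _ ≤ ENNReal.ofReal (2 ^ (n + 1)) * volume J := by gcongr

end IsAqWeight

theorem lebesgue_comparable_iff_weighted_comparable_general
    (q K : ℝ) (hq : 1 < q) (hK : 1 ≤ K) (v : ℝ → ℝ) (hv : IsAqWeight q K v)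
    (Ω E : Set ℝ)
    (hconn : ∀ x ∈ Ω, IsPreconnected (connectedComponentIn Ω x \ E)) :
    (∃ C : ℝ, 0 < C ∧ ∀ x ∈ Ω,
        volume (connectedComponentIn Ω x) ≤
          ENNReal.ofReal C * volume (connectedComponentIn Ω x \ E)) ↔
      (∃ C' : ℝ, 0 < C' ∧ ∀ x ∈ Ω,
        (∫⁻ t in connectedComponentIn Ω x, ENNReal.ofReal (v t)) ≤
          ENNReal.ofReal C' *
            ∫⁻ t in connectedComponentIn Ω x \ E, ENNReal.ofReal (v t)) := by
  have hI (x : ℝ) : (connectedComponentIn Ω x).OrdConnected :=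
    isPreconnected_connectedComponentIn.ordConnected
  have hJ (x : ℝ) (hx : x ∈ Ω) : (connectedComponentIn Ω x \ E).OrdConnected :=
    (hconn x hx).ordConnected
  simp only [← weightMeasure_apply]
  constructor
  · rintro ⟨C, -, hC⟩
    refine ⟨K * max C 2 ^ q, mul_pos (by linarith) (Real.rpow_pos_of_pos (by positivity) q),
      fun x hx => ?_⟩
    exact hv.weightMeasure_le_of_volume_le hq (by linarith) (hI x) (hJ x hx) sdiff_subset
      (hC x hx)
  · rintro ⟨C', hC'_pos, hC'⟩
    obtain ⟨n, hn⟩ : ∃ n : ℕ, aqDecayRatio q K ^ n < 1 / C' :=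
      exists_pow_lt_of_lt_one (one_div_pos.2 hC'_pos) (aqDecayRatio_lt_one (by linarith))
    refine ⟨2 ^ (n + 1), by positivity, fun x hx => ?_⟩
    exact hv.volume_le_of_weightMeasure_le hq hK (hI x) (hJ x hx) sdiff_subset
      ((lt_div_iff₀ hC'_pos).1 hn) (hC' x hx)

/-- **Equivalence of Lebesgue and `A_q`-weighted comparability of components.**
Let `v` be an `A_q` weight, `ν = v dx`, and suppose `I \ E` is connected for every
connected component `I` of `Ω`. Then `|I| ≤ C |I \ E|` holds for all components
with some uniform `C > 0` if and only if `ν(I) ≤ C' ν(I \ E)` holds for all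
components with some uniform `C' > 0`. -/
theorem lebesgue_comparable_iff_weighted_comparable
    (q K : ℝ) (hq : 1 < q) (hK : 1 ≤ K) (v : ℝ → ℝ) (hv : IsAqWeight q K v)
    (Ω E : Set ℝ) (hΩopen : IsOpen Ω) (hΩne : Ω.Nonempty)
    (hE : E ⊂ Ω) (hEclosed : Ω ∩ closure E ⊆ E)
    (hcomp : ∀ x ∈ Ω, ¬ connectedComponentIn Ω x ⊆ E)
    (hconn : ∀ x ∈ Ω, IsPreconnected (connectedComponentIn Ω x \ E)) :
    (∃ C : ℝ, 0 < C ∧ ∀ x ∈ Ω,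
        volume (connectedComponentIn Ω x) ≤
          ENNReal.ofReal C * volume (connectedComponentIn Ω x \ E)) ↔
      (∃ C' : ℝ, 0 < C' ∧ ∀ x ∈ Ω,
        (∫⁻ t in connectedComponentIn Ω x, ENNReal.ofReal (v t)) ≤
          ENNReal.ofReal C' *
            ∫⁻ t in connectedComponentIn Ω x \ E, ENNReal.ofReal (v t)) :=
  lebesgue_comparable_iff_weighted_comparable_general q K hq hK v hv Ω E hconn
end

section
/- Let R ∈ ℝ and let m : (R, ∞) → ℝ be continuous and bounded. Assume that m has no local minimum, i.e., there is no point t₀ ∈ (R, ∞) and δ > 0 such that m(t₀) ≤ m(t) for all t ∈ (t₀ - δ, t₀ + δ) ∩ (R, ∞). Then lim_{t→∞} m(t) exists (as a finite real number). -/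
/-!
Without local minima, the minimum of `m` over any compact interval `[a, b]` of the half-line is
attained at an endpoint, so `m` is quasiconcave. A quasiconcave function on an interval of `ℝ`
either never decreases, or, once it has decreased somewhere, it is antitone from that point on.
Being bounded, it therefore converges at infinity.
-/

open Set Filter Topology

theorem MonotoneOn.exists_tendsto_atTop {ι α : Type*} [SemilatticeSup ι] [TopologicalSpace α]
    [ConditionallyCompleteLattice α] [SupConvergenceClass α] {f : ι → α} {a : ι}
    (hf : MonotoneOn f (Ici a)) (hbdd : BddAbove (f '' Ici a)) :
    ∃ L, Tendsto f atTop (𝓝 L) := by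
  have hmono : Monotone fun x => f (x ⊔ a) := fun x y hxy =>
    hf le_sup_right le_sup_right (sup_le_sup_right hxy a)
  have hbdd' : BddAbove (range fun x => f (x ⊔ a)) :=
    hbdd.mono <| range_subset_iff.2 fun x => mem_image_of_mem f le_sup_right
  refine ⟨_, (tendsto_atTop_ciSup hmono hbdd').congr' ?_⟩
  filter_upwards [eventually_ge_atTop a] with x hx
  rw [sup_eq_left.2 hx]

theorem AntitoneOn.exists_tendsto_atTop {ι α : Type*} [SemilatticeSup ι] [TopologicalSpace α]
    [ConditionallyCompleteLattice α] [InfConvergenceClass α] {f : ι → α} {a : ι}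
    (hf : AntitoneOn f (Ici a)) (hbdd : BddBelow (f '' Ici a)) :
    ∃ L, Tendsto f atTop (𝓝 L) :=
  MonotoneOn.exists_tendsto_atTop (α := αᵒᵈ) hf.dual_right hbdd

section Quasiconcave

variable {𝕜 β : Type*} [Field 𝕜] [LinearOrder 𝕜] [IsStrictOrderedRing 𝕜] [LinearOrder β]
  {s : Set 𝕜} {f : 𝕜 → β}

theorem QuasiconcaveOn.min_le (hf : QuasiconcaveOn 𝕜 s f) {x y t : 𝕜} (hx : x ∈ s) (hy : y ∈ s)
    (hxt : x ≤ t) (hty : t ≤ y) : min (f x) (f y) ≤ f t :=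
  ((hf _).ordConnected.out ⟨hx, min_le_left _ _⟩ ⟨hy, min_le_right _ _⟩ ⟨hxt, hty⟩).2

theorem QuasiconcaveOn.antitoneOn_of_lt (hf : QuasiconcaveOn 𝕜 s f) {a b : 𝕜} (ha : a ∈ s)
    (hab : a < b) (hfab : f b < f a) : AntitoneOn f (s ∩ Ici b) := by
  have hle_b : ∀ x ∈ s ∩ Ici b, f x ≤ f b := fun x hx => by
    have hb := hf.min_le ha hx.1 hab.le hx.2
    exact (min_le_iff.1 hb).resolve_left hfab.not_ge
  intro x hx y hy hxy
  have hx' := hf.min_le ha hy.1 (hab.le.trans hx.2) hxy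
  exact (min_le_iff.1 hx').resolve_left ((hle_b x hx).trans_lt hfab).not_ge

theorem QuasiconcaveOn.exists_monotoneOn_or_antitoneOn (hf : QuasiconcaveOn 𝕜 s f) :
    ∃ b, MonotoneOn f (s ∩ Ici b) ∨ AntitoneOn f (s ∩ Ici b) := by
  by_cases hdec : ∃ a ∈ s, ∃ b ∈ s, a < b ∧ f b < f a
  · obtain ⟨a, ha, b, -, hab, hfab⟩ := hdec
    exact ⟨b, Or.inr (hf.antitoneOn_of_lt ha hab hfab)⟩
  · push Not at hdec
    have hmono : MonotoneOn f s := fun x hx y hy hxy =>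
      hxy.eq_or_lt.elim (fun h => h ▸ le_rfl) (hdec x hx y hy)
    exact ⟨0, Or.inl (hmono.mono inter_subset_left)⟩

end Quasiconcave

theorem min_le_of_forall_not_isLocalMin {β : Type*} [LinearOrder β] [TopologicalSpace β]
    [OrderClosedTopology β] {f : ℝ → β} {a b t : ℝ} (hf : ContinuousOn f (Icc a b))
    (hmin : ∀ x ∈ Ioo a b, ¬IsLocalMin f x) (ht : t ∈ Icc a b) : min (f a) (f b) ≤ f t := by
  obtain ⟨c, hc, hcmin⟩ := isCompact_Icc.exists_isMinOn ⟨t, ht⟩ hf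
  rcases hc.1.eq_or_lt with rfl | hac
  · exact (min_le_left _ _).trans (hcmin ht)
  rcases hc.2.eq_or_lt with rfl | hcb
  · exact (min_le_right _ _).trans (hcmin ht)
  exact absurd (hcmin.isLocalMin (Icc_mem_nhds hac hcb)) (hmin c ⟨hac, hcb⟩)

theorem quasiconcaveOn_of_forall_not_isLocalMin {β : Type*} [LinearOrder β] [TopologicalSpace β]
    [OrderClosedTopology β] {s : Set ℝ} {f : ℝ → β} (hs : s.OrdConnected)
    (hf : ContinuousOn f s) (hmin : ∀ x ∈ s, ¬IsLocalMin f x) : QuasiconcaveOn ℝ s f := by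
  refine fun r => convex_iff_ordConnected.2 ⟨fun x hx y hy t ht => ⟨hs.out hx.1 hy.1 ht, ?_⟩⟩
  have hxy : Icc x y ⊆ s := hs.out hx.1 hy.1
  calc r ≤ min (f x) (f y) := le_min hx.2 hy.2
    _ ≤ f t := min_le_of_forall_not_isLocalMin (hf.mono hxy)
        (fun z hz => hmin z (hxy (Ioo_subset_Icc_self hz))) ht

/-- **A bounded continuous function on a half-line with no local minimum has a
limit at infinity.** If `m : (R,∞) → ℝ` is continuous and bounded and there is no
`t₀ ∈ (R,∞)` and `δ > 0` with `m(t₀) ≤ m(t)` for all `t ∈ (t₀-δ, t₀+δ) ∩ (R,∞)`,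
then `lim_{t→∞} m(t)` exists. -/
theorem tendsto_atTop_of_no_local_min
    (R : ℝ) (m : ℝ → ℝ)
    (hcont : ContinuousOn m (Set.Ioi R))
    (hbdd : ∃ M : ℝ, ∀ t ∈ Set.Ioi R, |m t| ≤ M)
    (hnomin : ¬ ∃ t₀ ∈ Set.Ioi R, ∃ δ : ℝ, 0 < δ ∧
      ∀ t ∈ Set.Ioo (t₀ - δ) (t₀ + δ) ∩ Set.Ioi R, m t₀ ≤ m t) :
    ∃ L : ℝ, Filter.Tendsto m Filter.atTop (nhds L) := by
  have hnomin' : ∀ x ∈ Ioi R, ¬IsLocalMin m x := fun x hx hloc => by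
    obtain ⟨δ, hδ, hball⟩ := Metric.eventually_nhds_iff.1 hloc
    refine hnomin ⟨x, hx, δ, hδ, fun t ht => hball ?_⟩
    rw [Real.dist_eq, abs_sub_lt_iff]
    constructor <;> linarith [ht.1.1, ht.1.2]
  have hbounded : Bornology.IsBounded (m '' Ioi R) := by
    obtain ⟨M, hM⟩ := hbdd
    exact isBounded_iff_forall_norm_le.2 ⟨M, forall_mem_image.2 hM⟩
  obtain ⟨b, hb⟩ := (quasiconcaveOn_of_forall_not_isLocalMin ordConnected_Ioi hcont
    hnomin').exists_monotoneOn_or_antitoneOn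
  have hsub : Ici (max b (R + 1)) ⊆ Ioi R ∩ Ici b := fun t ht =>
    ⟨mem_Ioi.2 (by linarith [le_max_right b (R + 1), mem_Ici.1 ht]),
      mem_Ici.2 ((le_max_left _ _).trans ht)⟩
  have hbounded' := hbounded.subset (image_mono (hsub.trans inter_subset_left))
  rcases hb with hmono | hanti
  · exact (hmono.mono hsub).exists_tendsto_atTop hbounded'.bddAbove
  · exact (hanti.mono hsub).exists_tendsto_atTop hbounded'.bddBelow
end
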